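/- arXiv:math/0610894 — 2 statements merged into one kernel-verified Lean document; each statement's English description precedes it below -/
import Mathlib

section
/- Let σ²(h) = h^r with 0 < r ≤ 2 and fix c > 0, and let k ≥ 1 be an integer. Then as h ↓ 0: (i) if (2−r)k < 1, then ∫_0^c |φ_h(s)|^k ds ∼ [r^k |r−1|^k c^{(r−2)k+1} / (2^k ((r−2)k+1))] · h^{2k} (the ratio tends to 1); (ii) if r = 1, then for all 0 < h ≤ c, ∫_0^c |φ_h(s)|^k ds = h^{k+1}/(k+1) exactly; (iii) if (2−r)k = 1 and k ≥ 2, then ∫_0^c |φ_h(s)|^k ds ∼ |r(r−1)/2|^k · h^{2k} · log(1/h); (iv) if (2−r)k > 1, then ∫_0^∞ |φ_1(s)|^k ds < ∞ and ∫_0^c |φ_h(s)|^k ds ∼ h^{rk+1} · ∫_0^∞ |φ_1(s)|^k ds. -/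
open MeasureTheory Filter Topology

noncomputable section

/-- For `σ²(h) = h^r`, `φ_h(s) = (|s+h|^r + |s−h|^r − 2|s|^r)/2`. -/
def phiPow (r h s : ℝ) : ℝ := (|s + h| ^ r + |s - h| ^ r - 2 * |s| ^ r) / 2

lemma continuous_phiPow {r : ℝ} (hr : 0 < r) (h : ℝ) : Continuous (phiPow r h) := by
  have hc : Continuous fun x : ℝ => x ^ r :=
    continuous_iff_continuousAt.2 fun x => Real.continuousAt_rpow_const x r (Or.inr hr.le)
  unfold phiPow
  fun_prop

lemma rpow_second_diff_limit {r : ℝ} (hr : 0 < r) :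
    Tendsto (fun x : ℝ => ((1 + x) ^ r + (1 - x) ^ r - 2) / x ^ 2) (𝓝[≠] (0:ℝ))
      (𝓝 (r * (r - 1))) := by
  have hball : ∀ᶠ x : ℝ in 𝓝 0, 0 < 1 + x ∧ 0 < 1 - x := by
    have : Set.Ioo (-(1:ℝ)) 1 ∈ 𝓝 (0:ℝ) := Ioo_mem_nhds (by norm_num) (by norm_num)
    filter_upwards [this] with x hx
    constructor <;> [linarith [hx.1]; linarith [hx.2]]
  apply HasDerivAt.lhopital_zero_nhdsNE
    (f' := fun x => r * (1 + x) ^ (r - 1) - r * (1 - x) ^ (r - 1)) (g' := fun x => 2 * x)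
  · filter_upwards [eventually_nhdsWithin_of_eventually_nhds hball] with x hx
    have h1 : HasDerivAt (fun x : ℝ => (1 + x) ^ r) (1 * r * (1 + x) ^ (r - 1)) x :=
      ((hasDerivAt_id x).const_add 1).rpow_const (Or.inl hx.1.ne')
    have h2 : HasDerivAt (fun x : ℝ => (1 - x) ^ r) ((-1) * r * (1 - x) ^ (r - 1)) x :=
      ((hasDerivAt_id x).const_sub 1).rpow_const (Or.inl hx.2.ne')
    exact ((h1.add h2).sub_const 2).congr_deriv (by ring)
  · filter_upwards with x
    exact (hasDerivAt_pow 2 x).congr_deriv (by norm_num)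
  · filter_upwards [self_mem_nhdsWithin] with x hx
    simp only [Set.mem_compl_iff, Set.mem_singleton_iff] at hx
    intro h
    rcases mul_eq_zero.1 h with h | h
    · norm_num at h
    · exact hx h
  · have hc : ContinuousAt (fun x : ℝ => (1 + x) ^ r + (1 - x) ^ r - 2) 0 := by
      have c1 : ContinuousAt (fun x : ℝ => (1 + x) ^ r) 0 :=
        (ContinuousAt.rpow_const (by fun_prop) (by norm_num))
      have c2 : ContinuousAt (fun x : ℝ => (1 - x) ^ r) 0 :=
        (ContinuousAt.rpow_const (by fun_prop) (by norm_num))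
      exact (c1.add c2).sub continuousAt_const
    have := hc.tendsto
    simp only [add_zero, sub_zero, Real.one_rpow] at this
    norm_num at this
    exact tendsto_nhdsWithin_of_tendsto_nhds this
  · have : Tendsto (fun x : ℝ => x ^ 2) (𝓝 0) (𝓝 0) := by
      simpa using ((continuous_pow 2).tendsto (0:ℝ))
    exact tendsto_nhdsWithin_of_tendsto_nhds this
  · have d1 : HasDerivAt (fun x : ℝ => r * (1 + x) ^ (r - 1)) (r * (r - 1)) 0 := by
      have : HasDerivAt (fun x : ℝ => (1 + x) ^ (r - 1)) (1 * (r - 1) * (1 + 0) ^ (r - 1 - 1)) 0 :=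
        ((hasDerivAt_id 0).const_add 1).rpow_const (Or.inl (by norm_num))
      have := this.const_mul r
      exact this.congr_deriv (by simp only [add_zero, Real.one_rpow]; ring)
    have d2 : HasDerivAt (fun x : ℝ => r * (1 - x) ^ (r - 1)) (-(r * (r - 1))) 0 := by
      have : HasDerivAt (fun x : ℝ => (1 - x) ^ (r - 1)) ((-1) * (r - 1) * (1 - 0) ^ (r - 1 - 1)) 0 :=
        ((hasDerivAt_id 0).const_sub 1).rpow_const (Or.inl (by norm_num))
      have := this.const_mul r
      exact this.congr_deriv (by simp only [sub_zero, Real.one_rpow]; ring)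
    have s1 := hasDerivAt_iff_tendsto_slope.1 d1
    have s2 := hasDerivAt_iff_tendsto_slope.1 d2
    have comb := (s1.sub s2).div_const 2
    have : (r * (r - 1) - -(r * (r - 1))) / 2 = r * (r - 1) := by ring
    rw [this] at comb
    refine comb.congr' ?_
    filter_upwards [self_mem_nhdsWithin] with x hx
    simp only [Set.mem_compl_iff, Set.mem_singleton_iff] at hx
    rw [slope_def_field, slope_def_field]
    simp only [sub_zero, add_zero, Real.one_rpow, mul_one]
    rw [div_sub_div_same, div_div]
    rw [show r * (1 + x) ^ (r - 1) - r - (r * (1 - x) ^ (r - 1) - r)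
        = r * (1 + x) ^ (r - 1) - r * (1 - x) ^ (r - 1) from by ring, mul_comm x 2]

lemma phiPow_one_asymp {r : ℝ} (hr : 0 < r) :
    Tendsto (fun u : ℝ => phiPow r 1 u * u ^ (2 - r)) atTop (𝓝 (r * (r - 1) / 2)) := by
  have habs : Tendsto (fun x : ℝ => (|1 + x| ^ r + |1 - x| ^ r - 2) / x ^ 2) (𝓝[≠] (0:ℝ))
      (𝓝 (r * (r - 1))) := by
    refine (rpow_second_diff_limit hr).congr' ?_
    have : Set.Ioo (-(1:ℝ)) 1 ∈ 𝓝[≠] (0:ℝ) :=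
      nhdsWithin_le_nhds (Ioo_mem_nhds (by norm_num) (by norm_num))
    filter_upwards [this] with x hx
    rw [abs_of_pos (by linarith [hx.1] : (0:ℝ) < 1 + x),
      abs_of_pos (by linarith [hx.2] : (0:ℝ) < 1 - x)]
  have hinv : Tendsto (fun u : ℝ => u⁻¹) atTop (𝓝[≠] (0:ℝ)) :=
    tendsto_inv_atTop_nhdsGT_zero.mono_right (nhdsWithin_mono 0 (fun x hx => ne_of_gt hx))
  have comp := (habs.comp hinv).div_const 2
  refine comp.congr' ?_
  filter_upwards [eventually_gt_atTop 0] with u hu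
  have hu' : u ≠ 0 := hu.ne'
  have e : ∀ x : ℝ, |u * x| ^ r = u ^ r * |x| ^ r := fun x => by
    rw [abs_mul, abs_of_pos hu, Real.mul_rpow hu.le (abs_nonneg x)]
  have e1 : u + 1 = u * (1 + u⁻¹) := by field_simp
  have e2 : u - 1 = u * (1 - u⁻¹) := by field_simp
  have e3 : |u| ^ r = u ^ r := by rw [abs_of_pos hu]
  have key : phiPow r 1 u = u ^ r * ((|1 + u⁻¹| ^ r + |1 - u⁻¹| ^ r - 2) / 2) := by
    rw [phiPow, e1, e2, e, e, e3]; ring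
  rw [Function.comp_apply]
  rw [key]
  have hpow : u ^ r * u ^ (2 - r) = u ^ 2 := by
    rw [← Real.rpow_add hu, ← Real.rpow_two]
    norm_num
  have hinvsq : (u⁻¹) ^ 2 = (u ^ 2)⁻¹ := by rw [inv_pow]
  rw [hinvsq, div_inv_eq_mul]
  linear_combination (-(|1 + u⁻¹| ^ r + |1 - u⁻¹| ^ r - 2) / 2) * hpow

lemma phiPow_pow_asymp {r : ℝ} (hr : 0 < r) (k : ℕ) :
    Tendsto (fun u : ℝ => |phiPow r 1 u| ^ k * u ^ ((2 - r) * (k:ℝ))) atTop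
      (𝓝 (|r * (r - 1) / 2| ^ k)) := by
  have h1 := (phiPow_one_asymp hr).abs.pow k
  refine h1.congr' ?_
  filter_upwards [eventually_gt_atTop 0] with u hu
  have hnn : 0 ≤ u ^ (2 - r) := Real.rpow_nonneg hu.le _
  rw [abs_mul, abs_of_nonneg hnn, mul_pow, ← Real.rpow_natCast (u ^ (2 - r)) k,
    ← Real.rpow_mul hu.le]

lemma close_of_tendsto {g : ℝ → ℝ} {A α : ℝ} (hA : 0 < A)
    (hD : Tendsto (fun u : ℝ => g u * u ^ (-α)) atTop (𝓝 A)) :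
    ∀ ε : ℝ, 0 < ε → ∀ᶠ u in atTop, |g u - A * u ^ α| ≤ ε * (A * u ^ α) := by
  intro ε hε
  have hball := Metric.tendsto_nhds.1 hD (ε * A) (by positivity)
  filter_upwards [hball, eventually_gt_atTop 0] with u hcl hu
  rw [Real.dist_eq] at hcl
  have hup : (0:ℝ) < u ^ α := Real.rpow_pos_of_pos hu _
  have hid : g u = (g u * u ^ (-α)) * u ^ α := by
    rw [mul_assoc, Real.rpow_neg hu.le, inv_mul_cancel₀ hup.ne', mul_one]
  calc |g u - A * u ^ α| = |(g u * u ^ (-α) - A) * u ^ α| := by rw [sub_mul, ← hid]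
    _ = |g u * u ^ (-α) - A| * u ^ α := by rw [abs_mul, abs_of_pos hup]
    _ ≤ (ε * A) * u ^ α := by nlinarith
    _ = ε * (A * u ^ α) := by ring

lemma integral_phiPow_scale {r : ℝ} (k : ℕ) {c h : ℝ} (hh : 0 < h) :
    (∫ s in (0:ℝ)..c, |phiPow r h s| ^ k)
      = h ^ (r * k + 1) * ∫ u in (0:ℝ)..(c / h), |phiPow r 1 u| ^ k := by
  have key : ∀ s, |phiPow r h s| ^ k = h ^ (r * (k:ℝ)) * |phiPow r 1 (s / h)| ^ k := by
    intro s
    have : phiPow r h s = h ^ r * phiPow r 1 (s / h) := by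
      have e : ∀ x : ℝ, |h * x| ^ r = h ^ r * |x| ^ r := fun x => by
        rw [abs_mul, abs_of_pos hh, Real.mul_rpow hh.le (abs_nonneg x)]
      have e1 : s + h = h * (s / h + 1) := by field_simp
      have e2 : s - h = h * (s / h - 1) := by field_simp
      have e3 : s = h * (s / h) := by field_simp
      rw [phiPow, phiPow, e1, e2]
      nth_rewrite 3 [e3]
      rw [e, e, e]; ring
    rw [this, abs_mul, abs_of_pos (Real.rpow_pos_of_pos hh r), mul_pow,
      ← Real.rpow_natCast (h ^ r) k, ← Real.rpow_mul hh.le]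
  simp_rw [key]
  rw [intervalIntegral.integral_const_mul]
  rw [intervalIntegral.integral_comp_div (fun u => |phiPow r 1 u| ^ k) hh.ne']
  rw [zero_div, smul_eq_mul, Real.rpow_add hh, Real.rpow_one]
  ring

lemma tendsto_integral_div_atTop_gen {g w : ℝ → ℝ} {a : ℝ}
    (hgi : ∀ T, a ≤ T → IntervalIntegrable g volume a T)
    (hwi : ∀ T, a ≤ T → IntervalIntegrable w volume a T)
    (hw0 : ∀ u, a ≤ u → 0 ≤ w u)
    (hclose : ∀ ε : ℝ, 0 < ε → ∀ᶠ u in atTop, |g u - w u| ≤ ε * w u)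
    (hW : Tendsto (fun T => ∫ u in a..T, w u) atTop atTop) :
    Tendsto (fun T => (∫ u in a..T, g u) / (∫ u in a..T, w u)) atTop (𝓝 1) := by
  rw [Metric.tendsto_nhds]
  intro ε hε
  obtain ⟨M₀, hM₀⟩ := eventually_atTop.1 (hclose (ε / 4) (by positivity))
  set M := max M₀ a with hMdef
  have hMa : a ≤ M := le_max_right _ _
  have hM : ∀ u, M ≤ u → |g u - w u| ≤ ε / 4 * w u := fun u hu =>
    hM₀ u (le_trans (le_max_left _ _) hu)
  set C : ℝ := |(∫ u in a..M, g u) - ∫ u in a..M, w u| + 1 with hCdef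
  have hC : 0 < C := by positivity
  filter_upwards [eventually_ge_atTop M, hW.eventually_ge_atTop 1,
    hW.eventually_ge_atTop (4 * C / ε)] with T hTM hW1 hWC
  have hTa : a ≤ T := le_trans hMa hTM
  set G := ∫ u in a..T, g u with hG
  set W := ∫ u in a..T, w u with hWd
  have hWpos : (0:ℝ) < W := lt_of_lt_of_le one_pos hW1
  have higM : IntervalIntegrable g volume a M := hgi M hMa
  have hiwM : IntervalIntegrable w volume a M := hwi M hMa
  have higMT : IntervalIntegrable g volume M T := (higM).symm.trans (hgi T hTa)
  have hiwMT : IntervalIntegrable w volume M T := (hiwM).symm.trans (hwi T hTa)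
  have hsplitg : (∫ u in a..M, g u) + ∫ u in M..T, g u = G :=
    intervalIntegral.integral_add_adjacent_intervals higM higMT
  have hsplitw : (∫ u in a..M, w u) + ∫ u in M..T, w u = W :=
    intervalIntegral.integral_add_adjacent_intervals hiwM hiwMT
  have haM_nonneg : 0 ≤ ∫ u in a..M, w u :=
    intervalIntegral.integral_nonneg hMa (fun u hu => hw0 u hu.1)
  have hbound : |∫ u in M..T, (g u - w u)| ≤ ε / 4 * W := by
    calc |∫ u in M..T, (g u - w u)| ≤ ∫ u in M..T, |g u - w u| :=
          intervalIntegral.abs_integral_le_integral_abs hTM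
      _ ≤ ∫ u in M..T, ε / 4 * w u := by
          apply intervalIntegral.integral_mono_on hTM (higMT.sub hiwMT).abs
            (hiwMT.const_mul _)
          intro u hu
          exact hM u hu.1
      _ = ε / 4 * ∫ u in M..T, w u := intervalIntegral.integral_const_mul _ _
      _ ≤ ε / 4 * W := by
          have : (∫ u in M..T, w u) ≤ W := by linarith [hsplitw, haM_nonneg]
          nlinarith
  have hdiff : |G - W| ≤ (C - 1) + ε / 4 * W := by
    have e : G - W = ((∫ u in a..M, g u) - ∫ u in a..M, w u) + ∫ u in M..T, (g u - w u) := by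
      rw [intervalIntegral.integral_sub higMT hiwMT]
      linarith [hsplitg, hsplitw]
    rw [e]
    calc |((∫ u in a..M, g u) - ∫ u in a..M, w u) + ∫ u in M..T, (g u - w u)|
        ≤ |(∫ u in a..M, g u) - ∫ u in a..M, w u| + |∫ u in M..T, (g u - w u)| := abs_add_le _ _
      _ ≤ (C - 1) + ε / 4 * W := by
          refine add_le_add (by simp [hCdef]) hbound
  rw [Real.dist_eq]
  have e2 : G / W - 1 = (G - W) / W := by field_simp
  rw [e2, abs_div, abs_of_pos hWpos, div_lt_iff₀ hWpos]
  have h4 : 4 * C ≤ ε * W := by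
    rw [div_le_iff₀ hε] at hWC; nlinarith
  nlinarith [mul_pos hε hWpos]

lemma integral_phiPow_pos {r : ℝ} (hr : 0 < r) {k : ℕ}
    (hint : IntegrableOn (fun s => |phiPow r 1 s| ^ k) (Set.Ioi (0:ℝ))) :
    0 < ∫ s in Set.Ioi (0:ℝ), |phiPow r 1 s| ^ k := by
  set g := fun s : ℝ => |phiPow r 1 s| ^ k with hgdef
  have hg0 : g 0 = 1 := by
    have : phiPow r 1 0 = 1 := by
      rw [phiPow]
      norm_num [Real.zero_rpow hr.ne', Real.one_rpow]
    simp [hgdef, this]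
  have hgc : Continuous g := ((continuous_phiPow hr 1).abs.pow k)
  have hev : ∀ᶠ x in 𝓝 (0:ℝ), 1/2 < g x := by
    have := (hgc.tendsto 0)
    rw [hg0] at this
    exact this.eventually (eventually_gt_nhds (by norm_num))
  obtain ⟨δ, hδ, hball⟩ := Metric.eventually_nhds_iff.1 hev
  have hsub : Set.Ioo (0:ℝ) δ ⊆ {x | 1/2 < g x} := by
    intro x hx
    exact hball (by rw [Real.dist_eq, sub_zero, abs_of_pos hx.1]; exact hx.2)
  have hnn : ∀ x, 0 ≤ g x := fun x => pow_nonneg (abs_nonneg _) _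
  have h1 : (δ/2 : ℝ) ≤ ∫ x in Set.Ioo (0:ℝ) δ, g x := by
    have := setIntegral_mono_on (integrableOn_const (by simp [Real.volume_Ioo]))
      (hint.mono_set Set.Ioo_subset_Ioi_self) measurableSet_Ioo
      (f := fun _ => (1/2 : ℝ)) (g := g) (fun x hx => (hsub hx).le)
    rw [setIntegral_const] at this
    rw [Measure.real, Real.volume_Ioo, sub_zero, ENNReal.toReal_ofReal hδ.le] at this
    calc (δ/2:ℝ) = δ • (1/2 : ℝ) := by rw [smul_eq_mul]; ring
      _ ≤ _ := this
  have h2 : (∫ x in Set.Ioo (0:ℝ) δ, g x) ≤ ∫ x in Set.Ioi (0:ℝ), g x :=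
    setIntegral_mono_set hint (ae_restrict_of_ae (ae_of_all _ hnn))
      (HasSubset.Subset.eventuallyLE Set.Ioo_subset_Ioi_self)
  linarith

lemma phiPow_case_two (k : ℕ) (hk : 1 ≤ k) {c : ℝ} :
    ∀ h : ℝ, 0 < h → h ≤ c →
      (∫ s in (0:ℝ)..c, |phiPow 1 h s| ^ k) = h ^ (k + 1) / (k + 1) := by
  intro h hh hhc
  have hphi : ∀ s : ℝ, phiPow 1 h s = (|s + h| + |s - h| - 2 * |s|) / 2 := by
    intro s; rw [phiPow]; rw [Real.rpow_one, Real.rpow_one, Real.rpow_one]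
  have hcont : Continuous fun s => |phiPow 1 h s| ^ k :=
    ((continuous_phiPow one_pos h).abs.pow k)
  have hsplit : (∫ s in (0:ℝ)..h, |phiPow 1 h s| ^ k) + (∫ s in h..c, |phiPow 1 h s| ^ k)
      = ∫ s in (0:ℝ)..c, |phiPow 1 h s| ^ k :=
    intervalIntegral.integral_add_adjacent_intervals (hcont.intervalIntegrable _ _)
      (hcont.intervalIntegrable _ _)
  have hright : (∫ s in h..c, |phiPow 1 h s| ^ k) = 0 := by
    rw [intervalIntegral.integral_congr (g := fun _ => (0:ℝ))]
    · simp
    · intro s hs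
      show |phiPow 1 h s| ^ k = 0
      rw [Set.uIcc_of_le hhc] at hs
      have h1 : 0 ≤ s - h := by linarith [hs.1]
      have h2 : 0 ≤ s := by linarith [hs.1, hh]
      rw [hphi, abs_of_nonneg (by linarith : (0:ℝ) ≤ s + h), abs_of_nonneg h1,
        abs_of_nonneg h2]
      rw [show s + h + (s - h) - 2 * s = 0 from by ring]
      simp [zero_pow (by omega : k ≠ 0)]
  have hleft : (∫ s in (0:ℝ)..h, |phiPow 1 h s| ^ k) = h ^ (k+1) / (k+1) := by
    rw [intervalIntegral.integral_congr (g := fun s => (h - s) ^ k)]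
    · rw [intervalIntegral.integral_comp_sub_left (fun s : ℝ => s ^ k) h]
      simp [integral_pow]
    · intro s hs
      show |phiPow 1 h s| ^ k = (h - s) ^ k
      rw [Set.uIcc_of_le hh.le] at hs
      rw [hphi, abs_of_nonneg (by linarith [hs.1, hh] : (0:ℝ) ≤ s + h),
        abs_of_nonpos (by linarith [hs.2] : s - h ≤ 0), abs_of_nonneg hs.1]
      rw [show s + h + -(s - h) - 2 * s = 2 * (h - s) from by ring]
      rw [show 2 * (h - s) / 2 = h - s from by ring]
      rw [abs_of_nonneg (by linarith [hs.2] : (0:ℝ) ≤ h - s)]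
  rw [← hsplit, hright, hleft]
  ring

/-- **Lemma 4.1.** Let `σ²(h) = h^r`, `0 < r ≤ 2`, `c > 0` and `k ≥ 1`. Then, at zero:
(i) if `(2−r)k < 1`, `∫_0^c |φ_h(s)|^k ds ∼ [r^k |r−1|^k c^{(r−2)k+1}/(2^k((r−2)k+1))] h^{2k}`;
(ii) if `r = 1`, `∫_0^c |φ_h(s)|^k ds = h^{k+1}/(k+1)` exactly for `0 < h ≤ c`;
(iii) if `(2−r)k = 1`, `k ≥ 2`, `∫_0^c |φ_h(s)|^k ds ∼ |r(r−1)/2|^k h^{2k} log(1/h)`;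
(iv) if `(2−r)k > 1`, `∫_0^∞ |φ_1(s)|^k ds < ∞` and
`∫_0^c |φ_h(s)|^k ds ∼ h^{rk+1} ∫_0^∞ |φ_1(s)|^k ds`. -/
theorem phiPow_integral_asymptotics (r c : ℝ) (hr : 0 < r) (hr2 : r ≤ 2)
    (hcpos : 0 < c) (k : ℕ) (hk : 1 ≤ k) :
    ((2 - r) * k < 1 →
      Tendsto (fun h : ℝ => (∫ s in (0:ℝ)..c, |phiPow r h s| ^ k) /
          ((r ^ k * |r - 1| ^ k * c ^ ((r - 2) * k + 1) / (2 ^ k * ((r - 2) * k + 1))) *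
            h ^ (2 * k)))
        (𝓝[>] (0:ℝ)) (𝓝 1)) ∧
    (r = 1 → ∀ h : ℝ, 0 < h → h ≤ c →
      (∫ s in (0:ℝ)..c, |phiPow r h s| ^ k) = h ^ (k + 1) / (k + 1)) ∧
    ((2 - r) * k = 1 → 2 ≤ k →
      Tendsto (fun h : ℝ => (∫ s in (0:ℝ)..c, |phiPow r h s| ^ k) /
          (|r * (r - 1) / 2| ^ k * h ^ (2 * k) * Real.log (1 / h)))
        (𝓝[>] (0:ℝ)) (𝓝 1)) ∧
    (1 < (2 - r) * k →
      IntegrableOn (fun s => |phiPow r 1 s| ^ k) (Set.Ioi (0:ℝ)) ∧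
      Tendsto (fun h : ℝ => (∫ s in (0:ℝ)..c, |phiPow r h s| ^ k) /
          (h ^ (r * k + 1) * ∫ s in Set.Ioi (0:ℝ), |phiPow r 1 s| ^ k))
        (𝓝[>] (0:ℝ)) (𝓝 1)) := by
  have hk1 : (1:ℝ) ≤ (k:ℝ) := by exact_mod_cast hk
  set g : ℝ → ℝ := fun u => |phiPow r 1 u| ^ k with hgdef
  have hgc : Continuous g := (continuous_phiPow hr 1).abs.pow k
  have hgnn : ∀ u, 0 ≤ g u := fun u => pow_nonneg (abs_nonneg _) _
  have hD : Tendsto (fun u : ℝ => g u * u ^ ((2 - r) * (k:ℝ))) atTop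
      (𝓝 (|r * (r - 1) / 2| ^ k)) := phiPow_pow_asymp hr k
  have hcomp : Tendsto (fun h : ℝ => c / h) (𝓝[>] (0:ℝ)) atTop := by
    have := tendsto_inv_nhdsGT_zero.const_mul_atTop hcpos
    exact this.congr fun h => (div_eq_mul_inv c h).symm
  have hsub : ∀ h : ℝ, 0 < h → (∫ s in (0:ℝ)..c, |phiPow r h s| ^ k)
      = h ^ (r * (k:ℝ) + 1) * ∫ u in (0:ℝ)..(c / h), g u := fun h hh =>
    integral_phiPow_scale k hh
  refine ⟨?_, ?_, ?_, ?_⟩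
  · -- case (i)
    intro hik
    have hr1 : r ≠ 1 := by
      intro h1
      rw [h1] at hik
      norm_num at hik
      linarith
    set A : ℝ := |r * (r - 1) / 2| ^ k with hAdef
    have hA : 0 < A := by
      apply pow_pos
      apply abs_pos.2
      intro h0
      rcases mul_eq_zero.1 (by rcases div_eq_zero_iff.1 h0 with h | h; exact h; norm_num at h) with
        h | h
      · exact hr.ne' h
      · exact hr1 (by linarith [sub_eq_zero.1 h])
    set α : ℝ := (r - 2) * (k:ℝ) with hαdef
    have hα : -1 < α := by
      have : (2 - r) * (k:ℝ) = -α := by rw [hαdef]; ring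
      linarith [hik, this]
    have hα1 : 0 < α + 1 := by linarith
    set w : ℝ → ℝ := fun u => A * u ^ α with hwdef
    have hgi : ∀ T, (0:ℝ) ≤ T → IntervalIntegrable g volume 0 T :=
      fun T _ => hgc.intervalIntegrable _ _
    have hwi : ∀ T, (0:ℝ) ≤ T → IntervalIntegrable w volume 0 T :=
      fun T _ => (intervalIntegral.intervalIntegrable_rpow' hα).const_mul A
    have hw0 : ∀ u, (0:ℝ) ≤ u → 0 ≤ w u := fun u hu =>
      mul_nonneg hA.le (Real.rpow_nonneg hu _)
    have hD' : Tendsto (fun u : ℝ => g u * u ^ (-α)) atTop (𝓝 A) := by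
      have e : (2 - r) * (k:ℝ) = -α := by rw [hαdef]; ring
      rw [e] at hD
      exact hD
    have hclose := close_of_tendsto hA hD'
    have hWeq : ∀ T : ℝ, (∫ u in (0:ℝ)..T, w u) = A * T ^ (α + 1) / (α + 1) := by
      intro T
      rw [hwdef]
      rw [intervalIntegral.integral_const_mul]
      rw [integral_rpow (Or.inl hα), Real.zero_rpow hα1.ne', sub_zero]
      ring
    have hW : Tendsto (fun T => ∫ u in (0:ℝ)..T, w u) atTop atTop := by
      have h1 : Tendsto (fun T : ℝ => A * T ^ (α + 1) / (α + 1)) atTop atTop := by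
        have := (tendsto_rpow_atTop hα1).const_mul_atTop
          (show (0:ℝ) < A / (α + 1) by positivity)
        exact this.congr fun T => by ring
      exact h1.congr fun T => (hWeq T).symm
    have main := (tendsto_integral_div_atTop_gen hgi hwi hw0 hclose hW).comp hcomp
    refine main.congr' ?_
    filter_upwards [self_mem_nhdsWithin] with h hh
    rw [Set.mem_Ioi] at hh
    have hX : (0:ℝ) < h ^ (r * (k:ℝ) + 1) := Real.rpow_pos_of_pos hh _
    have hch : (0:ℝ) < c / h := div_pos hcpos hh
    have hKey : (r ^ k * |r - 1| ^ k * c ^ (α + 1) / (2 ^ k * (α + 1)))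
        * h ^ (2 * k) = h ^ (r * (k:ℝ) + 1) * (∫ u in (0:ℝ)..(c / h), w u) := by
      rw [hWeq]
      have hX2 : (0:ℝ) < h ^ (α + 1) := Real.rpow_pos_of_pos hh _
      have e1 : (c / h) ^ (α + 1) = c ^ (α + 1) / h ^ (α + 1) :=
        Real.div_rpow hcpos.le hh.le _
      have e2 : h ^ (r * (k:ℝ) + 1) / h ^ (α + 1) = h ^ (2 * k : ℕ) := by
        rw [← Real.rpow_sub hh, ← Real.rpow_natCast h (2 * k)]
        congr 1
        push_cast
        rw [hαdef]
        ring
      have e2' : h ^ (r * (k:ℝ) + 1) = h ^ (2 * k : ℕ) * h ^ (α + 1) := by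
        rw [← e2]
        field_simp
      have eA : A = r ^ k * |r - 1| ^ k / 2 ^ k := by
        rw [hAdef, abs_div, abs_mul, abs_of_pos hr, abs_two, div_pow, mul_pow]
      rw [eA, e1, e2']
      have h2k : ((2:ℝ)) ^ k ≠ 0 := by positivity
      field_simp
    show (∫ u in (0:ℝ)..(c / h), g u) / (∫ u in (0:ℝ)..(c / h), w u) = _
    rw [hsub h hh, hKey, mul_div_mul_left _ _ hX.ne']
  · -- case (ii)
    intro hreq
    subst hreq
    exact phiPow_case_two k hk
  · -- case (iii)
    intro hik3 hk2
    have hk2' : (2:ℝ) ≤ (k:ℝ) := by exact_mod_cast hk2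
    have hr1 : r ≠ 1 := by
      intro h1
      rw [h1] at hik3
      norm_num at hik3
      linarith
    set A : ℝ := |r * (r - 1) / 2| ^ k with hAdef
    have hA : 0 < A := by
      apply pow_pos
      apply abs_pos.2
      intro h0
      rcases mul_eq_zero.1 (by rcases div_eq_zero_iff.1 h0 with h | h; exact h; norm_num at h) with
        h | h
      · exact hr.ne' h
      · exact hr1 (by linarith [sub_eq_zero.1 h])
    set w : ℝ → ℝ := fun u => A * u ^ (-1:ℝ) with hwdef
    have hgi : ∀ T, (1:ℝ) ≤ T → IntervalIntegrable g volume 1 T :=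
      fun T _ => hgc.intervalIntegrable _ _
    have hwi : ∀ T, (1:ℝ) ≤ T → IntervalIntegrable w volume 1 T := by
      intro T hT
      apply ContinuousOn.intervalIntegrable
      apply ContinuousOn.mul continuousOn_const
      intro x hx
      rw [Set.uIcc_of_le hT] at hx
      exact (Real.continuousAt_rpow_const x _ (Or.inl (by linarith [hx.1]))).continuousWithinAt
    have hw0 : ∀ u, (1:ℝ) ≤ u → 0 ≤ w u := fun u hu =>
      mul_nonneg hA.le (Real.rpow_nonneg (by linarith) _)
    have hD' : Tendsto (fun u : ℝ => g u * u ^ (-(-1):ℝ)) atTop (𝓝 A) := by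
      have e : (2 - r) * (k:ℝ) = -(-1:ℝ) := by rw [hik3]; norm_num
      rw [e] at hD
      exact hD
    have hclose := close_of_tendsto hA hD'
    have hWeq : ∀ T : ℝ, 1 ≤ T → (∫ u in (1:ℝ)..T, w u) = A * Real.log T := by
      intro T hT
      rw [hwdef]
      simp only [Real.rpow_neg_one]
      rw [intervalIntegral.integral_const_mul]
      rw [integral_inv (by rw [Set.uIcc_of_le hT]; intro hmem; linarith [hmem.1])]
      rw [div_one]
    have hW : Tendsto (fun T => ∫ u in (1:ℝ)..T, w u) atTop atTop := by
      have h1 : Tendsto (fun T : ℝ => A * Real.log T) atTop atTop :=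
        Real.tendsto_log_atTop.const_mul_atTop hA
      refine h1.congr' ?_
      filter_upwards [eventually_ge_atTop 1] with T hT
      exact (hWeq T hT).symm
    have P := tendsto_integral_div_atTop_gen hgi hwi hw0 hclose hW
    have P' : Tendsto (fun T => (∫ u in (1:ℝ)..T, g u) / (A * Real.log T)) atTop (𝓝 1) := by
      refine P.congr' ?_
      filter_upwards [eventually_ge_atTop 1] with T hT
      rw [hWeq T hT]
    have hsplitT : ∀ T : ℝ, (∫ u in (0:ℝ)..T, g u)
        = (∫ u in (0:ℝ)..1, g u) + ∫ u in (1:ℝ)..T, g u := fun T =>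
      (intervalIntegral.integral_add_adjacent_intervals (hgc.intervalIntegrable _ _)
        (hgc.intervalIntegrable _ _)).symm
    have hlim0 : Tendsto (fun T : ℝ => (∫ u in (0:ℝ)..1, g u) / (A * Real.log T)) atTop
        (𝓝 0) := tendsto_const_nhds.div_atTop (Real.tendsto_log_atTop.const_mul_atTop hA)
    have Q : Tendsto (fun T : ℝ => (∫ u in (0:ℝ)..T, g u) / (A * Real.log T)) atTop (𝓝 1) := by
      have := hlim0.add P'
      rw [zero_add] at this
      refine this.congr fun T => ?_
      rw [hsplitT T, add_div]
    have R := Q.comp hcomp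
    have hL : Tendsto (fun h : ℝ => Real.log (1 / h)) (𝓝[>] (0:ℝ)) atTop := by
      have h1 : Tendsto (fun h : ℝ => -Real.log h) (𝓝[>] (0:ℝ)) atTop :=
        tendsto_neg_atBot_atTop.comp Real.tendsto_log_nhdsGT_zero
      refine h1.congr fun h => ?_
      rw [one_div, Real.log_inv]
    have S : Tendsto (fun h : ℝ => Real.log (c / h) / Real.log (1 / h)) (𝓝[>] (0:ℝ)) (𝓝 1) := by
      have h2 : Tendsto (fun h : ℝ => Real.log c / Real.log (1 / h) + 1) (𝓝[>] (0:ℝ)) (𝓝 1) := by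
        have h0 : Tendsto (fun h : ℝ => Real.log c / Real.log (1 / h)) (𝓝[>] (0:ℝ)) (𝓝 0) :=
          Tendsto.div_atTop (tendsto_const_nhds (x := Real.log c)) hL
        have := h0.add (tendsto_const_nhds (x := (1:ℝ)))
        rw [zero_add] at this
        exact this
      refine h2.congr' ?_
      filter_upwards [hL.eventually_gt_atTop 0, self_mem_nhdsWithin] with h hLpos hh
      rw [Set.mem_Ioi] at hh
      have hlog : Real.log (c / h) = Real.log c + Real.log (1 / h) := by
        rw [one_div, Real.log_inv, Real.log_div hcpos.ne' hh.ne']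
        ring
      rw [hlog, add_div, div_self hLpos.ne']
    have prod := R.mul S
    rw [mul_one] at prod
    refine prod.congr' ?_
    filter_upwards [self_mem_nhdsWithin, hL.eventually_gt_atTop 0,
      Ioo_mem_nhdsGT_of_mem (Set.left_mem_Ico.2 hcpos)] with h hh hL1 hIoo
    rw [Set.mem_Ioi] at hh
    have hL2 : 0 < Real.log (c / h) := Real.log_pos ((one_lt_div hh).2 hIoo.2)
    have hXeq : h ^ (r * (k:ℝ) + 1) = h ^ (2 * k : ℕ) := by
      rw [← Real.rpow_natCast h (2 * k)]
      congr 1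
      push_cast
      linarith [hik3]
    have hX : (0:ℝ) < h ^ (2 * k : ℕ) := by positivity
    show ((∫ u in (0:ℝ)..(c/h), g u) / (A * Real.log (c / h)))
        * (Real.log (c / h) / Real.log (1 / h)) = _
    rw [hsub h hh, hXeq]
    field_simp
  · -- case (iv)
    intro hik4
    have hβ : (1:ℝ) < (2 - r) * (k:ℝ) := hik4
    set A : ℝ := |r * (r - 1) / 2| ^ k with hAdef
    have hAnn : 0 ≤ A := pow_nonneg (abs_nonneg _) _
    obtain ⟨M₀, hM₀⟩ := eventually_atTop.1 (hD.eventually (eventually_le_nhds (lt_add_one A)))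
    set M : ℝ := max M₀ 1 with hMdef
    have hM1 : (1:ℝ) ≤ M := le_max_right _ _
    have hMpos : (0:ℝ) < M := lt_of_lt_of_le one_pos hM1
    have hint : IntegrableOn g (Set.Ioi (0:ℝ)) := by
      have hunion : Set.Ioc (0:ℝ) M ∪ Set.Ioi M = Set.Ioi 0 :=
        Set.Ioc_union_Ioi_eq_Ioi hMpos.le
      rw [← hunion]
      apply IntegrableOn.union
      · exact (hgc.integrableOn_Icc).mono_set Set.Ioc_subset_Icc_self
      · have hdom : IntegrableOn (fun u : ℝ => (A + 1) * u ^ (-((2 - r) * (k:ℝ))))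
            (Set.Ioi M) := by
          apply Integrable.const_mul
          exact integrableOn_Ioi_rpow_of_lt (by linarith) hMpos
        apply Integrable.mono hdom (hgc.aestronglyMeasurable.restrict)
        rw [ae_restrict_iff' measurableSet_Ioi]
        apply ae_of_all
        intro u hu
        rw [Set.mem_Ioi] at hu
        have hu0 : (0:ℝ) < u := lt_trans hMpos hu
        have hble : g u * u ^ ((2 - r) * (k:ℝ)) ≤ A + 1 :=
          hM₀ u (le_trans (le_max_left _ _) hu.le)
        have hup : (0:ℝ) < u ^ ((2 - r) * (k:ℝ)) := Real.rpow_pos_of_pos hu0 _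
        have hgu : g u ≤ (A + 1) * u ^ (-((2 - r) * (k:ℝ))) := by
          rw [Real.rpow_neg hu0.le]
          calc g u = g u * u ^ ((2 - r) * (k:ℝ)) * (u ^ ((2 - r) * (k:ℝ)))⁻¹ := by
                field_simp
            _ ≤ (A + 1) * (u ^ ((2 - r) * (k:ℝ)))⁻¹ :=
                mul_le_mul_of_nonneg_right hble (inv_nonneg.2 hup.le)
        rw [Real.norm_eq_abs, Real.norm_eq_abs, abs_of_nonneg (hgnn u),
          abs_of_nonneg (by positivity)]
        exact hgu
    refine ⟨hint, ?_⟩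
    have hIpos : 0 < ∫ s in Set.Ioi (0:ℝ), g s := integral_phiPow_pos hr hint
    have htend : Tendsto (fun h : ℝ => ∫ u in (0:ℝ)..(c / h), g u) (𝓝[>] (0:ℝ))
        (𝓝 (∫ s in Set.Ioi (0:ℝ), g s)) :=
      intervalIntegral_tendsto_integral_Ioi 0 hint hcomp
    have hfin := htend.div_const (∫ s in Set.Ioi (0:ℝ), g s)
    rw [div_self hIpos.ne'] at hfin
    refine hfin.congr' ?_
    filter_upwards [self_mem_nhdsWithin] with h hh
    rw [Set.mem_Ioi] at hh
    have hX : (0:ℝ) < h ^ (r * (k:ℝ) + 1) := Real.rpow_pos_of_pos hh _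
    show (∫ u in (0:ℝ)..(c/h), g u) / (∫ s in Set.Ioi (0:ℝ), g s) = _
    rw [hsub h hh, mul_div_mul_left _ _ hX.ne']
end
end

section
/- Let σ²(h) = h^r with 0 < r ≤ 2, fix −∞ < a < b < ∞ with c = b − a, and let k ≥ 1 be an integer. Then there exist finite positive constants D = D(r,k,c), independent of h, such that as h ↓ 0: (i) if (2−r)k < 1, then ∫_a^b∫_a^b |ρ_h(x−y)|^k dx dy ∼ D · h^{(2−r)k}; (ii) if r = 1, then ∫_a^b∫_a^b |ρ_h(x−y)|^k dx dy ∼ (2c/(k+1)) · h; (iii) if (2−r)k = 1 and k ≥ 2, then ∫_a^b∫_a^b |ρ_h(x−y)|^k dx dy ∼ D · h · log(1/h); (iv) if (2−r)k > 1, then ∫_a^b∫_a^b |ρ_h(x−y)|^k dx dy ∼ D · h. (Here '∼' means the ratio of the two sides tends to 1 as h ↓ 0.) -/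
open MeasureTheory Filter Topology

set_option maxHeartbeats 1600000

noncomputable section

/-- For `σ²(h) = h^r`, `ρ_h(s) = φ_h(s)/h^r`. -/
def rhoPow (r h s : ℝ) : ℝ := phiPow r h s / h ^ r

open intervalIntegral

namespace RhoAux

/-- the scaled profile -/
def g (r t : ℝ) : ℝ := (|t + 1| ^ r + |t - 1| ^ r - 2 * |t| ^ r) / 2

lemma g_even (r t : ℝ) : g r (-t) = g r t := by
  unfold g
  have h1 : |-t + 1| = |t - 1| := by rw [← abs_neg]; ring_nf
  have h2 : |-t - 1| = |t + 1| := by rw [← abs_neg]; ring_nf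
  rw [h1, h2, abs_neg]; ring

lemma continuous_abs_rpow {r : ℝ} (hr : 0 < r) : Continuous (fun t : ℝ => |t| ^ r) := by
  apply continuous_iff_continuousAt.2
  intro x
  exact (Real.continuousAt_rpow_const _ _ (by right; exact hr.le)).comp continuous_abs.continuousAt

lemma g_cont {r : ℝ} (hr : 0 < r) : Continuous (g r) := by
  unfold g
  apply Continuous.div_const
  apply Continuous.sub
  · exact ((continuous_abs_rpow hr).comp (continuous_id.add continuous_const)).add
      ((continuous_abs_rpow hr).comp (continuous_id.sub continuous_const))
  · exact continuous_const.mul (continuous_abs_rpow hr)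

lemma rhoPow_eq_g {r h : ℝ} (hh : 0 < h) (s : ℝ) : rhoPow r h s = g r (s / h) := by
  unfold rhoPow phiPow g
  have hd : ∀ u : ℝ, |s / h + u| ^ r = |s + u * h| ^ r / h ^ r := by
    intro u
    have : s / h + u = (s + u * h) / h := by field_simp
    rw [this, abs_div, abs_of_pos hh, Real.div_rpow (abs_nonneg _) hh.le]
  have h1 := hd 1
  have h2 := hd (-1)
  simp only [one_mul, neg_one_mul] at h1 h2
  have h3 : |s / h| ^ r = |s| ^ r / h ^ r := by
    rw [abs_div, abs_of_pos hh, Real.div_rpow (abs_nonneg _) hh.le]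
  rw [show s / h - 1 = s / h + (-1) by ring] at *
  rw [h1, h2, h3, show s + -h = s - h by ring]
  field_simp

lemma g_zero {r : ℝ} (hr : 0 < r) : g r 0 = 1 := by
  unfold g
  norm_num [Real.zero_rpow (ne_of_gt hr), Real.one_rpow]

lemma g_two (t : ℝ) : g 2 t = 1 := by
  unfold g
  have habs : ∀ x : ℝ, |x| ^ (2:ℝ) = x ^ 2 := by
    intro x
    rw [show ((2:ℝ) = ((2:ℕ):ℝ)) by norm_num, Real.rpow_natCast, sq_abs]
  rw [habs, habs, habs]
  ring

lemma g_one {t : ℝ} (ht : 0 ≤ t) : g 1 t = max (1 - t) 0 := by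
  unfold g
  simp only [Real.rpow_one]
  rcases le_or_gt t 1 with h | h
  · rw [abs_of_nonneg (by linarith), abs_of_nonpos (by linarith), abs_of_nonneg ht,
      max_eq_left (by linarith)]
    ring
  · rw [abs_of_nonneg (by linarith), abs_of_nonneg (by linarith), abs_of_nonneg ht,
      max_eq_right (by linarith)]
    ring

end RhoAux

namespace RhoAux2

variable {F : ℝ → ℝ}

lemma primitive_cont (hF : Continuous F) : Continuous (fun u => ∫ s in (0:ℝ)..u, F s) :=
  continuous_iff_continuousAt.2 fun u =>
    ((hF.integral_hasStrictDerivAt 0 u).hasDerivAt).continuousAt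

lemma primitive_odd (hF : Continuous F) (hFe : ∀ t, F (-t) = F t) (u : ℝ) :
    (∫ s in (0:ℝ)..(-u), F s) = - ∫ s in (0:ℝ)..u, F s := by
  have h1 : (∫ s in (0:ℝ)..u, F (-s)) = ∫ s in (-u)..(0:ℝ), F s := by
    simpa using integral_comp_neg (a := (0:ℝ)) (b := u) F
  simp only [hFe] at h1
  rw [integral_symm, ← h1]

lemma double_to_single (hF : Continuous F) (hFe : ∀ t, F (-t) = F t) {a b : ℝ}
    (hab : a ≤ b) :
    (∫ x in a..b, ∫ y in a..b, F (x - y)) =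
      2 * ∫ s in (0:ℝ)..(b - a), (b - a - s) * F s := by
  set Φ : ℝ → ℝ := fun u => ∫ s in (0:ℝ)..u, F s with hΦ
  have hΦc : Continuous Φ := primitive_cont hF
  have inner : ∀ x : ℝ, (∫ y in a..b, F (x - y)) = Φ (x - a) - Φ (x - b) := by
    intro x
    rw [integral_comp_sub_left F x]
    rw [← integral_interval_sub_left (hF.intervalIntegrable _ _) (hF.intervalIntegrable _ _)]
  have houter : (∫ x in a..b, ∫ y in a..b, F (x - y))
      = (∫ x in a..b, Φ (x - a)) - ∫ x in a..b, Φ (x - b) := by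
    have i1 : IntervalIntegrable (fun x => Φ (x - a)) volume a b :=
      (hΦc.comp (by fun_prop)).intervalIntegrable _ _
    have i2 : IntervalIntegrable (fun x => Φ (x - b)) volume a b :=
      (hΦc.comp (by fun_prop)).intervalIntegrable _ _
    rw [← integral_sub i1 i2]
    exact integral_congr fun x _ => inner x
  have h1 : (∫ x in a..b, Φ (x - a)) = ∫ u in (0:ℝ)..(b - a), Φ u := by
    simpa using integral_comp_sub_right Φ a
  have h2 : (∫ x in a..b, Φ (x - b)) = ∫ u in (a - b)..(0:ℝ), Φ u := by
    simpa using integral_comp_sub_right Φ b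
  have h3 : (∫ u in (a - b)..(0:ℝ), Φ u) = - ∫ u in (0:ℝ)..(b - a), Φ u := by
    have := integral_comp_neg (a := (0:ℝ)) (b := b - a) Φ
    rw [show -(b-a) = a - b by ring, neg_zero] at this
    rw [← this]
    have hodd : ∀ u, Φ (-u) = - Φ u := fun u => primitive_odd hF hFe u
    simp only [hodd]
    rw [intervalIntegral.integral_neg]
  have hIBP : (∫ u in (0:ℝ)..(b - a), Φ u) = ∫ s in (0:ℝ)..(b - a), (b - a - s) * F s := by
    have := integral_mul_deriv_eq_deriv_mul_of_hasDerivAt (a := (0:ℝ)) (b := b - a)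
      (u := Φ) (v := fun s => s - (b - a)) (u' := F) (v' := fun _ => (1:ℝ))
      (hΦc.continuousOn) ((continuous_id.sub continuous_const).continuousOn)
      (fun x _ => (hF.integral_hasStrictDerivAt 0 x).hasDerivAt)
      (fun x _ => (hasDerivAt_id x).sub_const _)
      (hF.intervalIntegrable _ _) (intervalIntegrable_const)
    simp only [mul_one] at this
    rw [this]
    have hΦ0 : Φ 0 = 0 := integral_same
    rw [hΦ0]
    rw [show Φ (b-a) * (b - a - (b - a)) - 0 * (0 - (b-a)) = 0 by ring, zero_sub,
      ← intervalIntegral.integral_neg]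
    exact integral_congr fun s _ => by ring
  rw [houter, h1, h2, h3, hIBP]; ring

end RhoAux2

namespace RhoAux3

lemma cesaro {f w : ℝ → ℝ} {K : ℝ}
    (hfc : Continuous f) (hwc : ContinuousOn w (Set.Ici 1))
    (hwpos : ∀ t, 1 ≤ t → 0 < w t)
    (hW : Tendsto (fun T => ∫ t in (1:ℝ)..T, w t) atTop atTop)
    (hlim : Tendsto (fun t => f t / w t) atTop (𝓝 K)) :
    Tendsto (fun T => (∫ t in (1:ℝ)..T, f t) / (∫ t in (1:ℝ)..T, w t)) atTop (𝓝 K) := by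
  set W : ℝ → ℝ := fun T => ∫ t in (1:ℝ)..T, w t with hWdef
  have hwint : ∀ {x y : ℝ}, 1 ≤ x → 1 ≤ y → IntervalIntegrable w volume x y := by
    intro x y hx hy
    apply ContinuousOn.intervalIntegrable (hwc.mono ?_)
    intro t ht
    rw [Set.mem_uIcc] at ht
    rcases ht with ht | ht
    · exact le_trans hx ht.1
    · exact le_trans hy ht.1
  have hgint : ∀ {x y : ℝ}, 1 ≤ x → 1 ≤ y →
      IntervalIntegrable (fun t => f t - K * w t) volume x y := by
    intro x y hx hy
    exact (hfc.intervalIntegrable _ _).sub ((hwint hx hy).const_mul K)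
  set E : ℝ → ℝ := fun T => ∫ t in (1:ℝ)..T, (f t - K * w t) with hEdef
  have key : Tendsto (fun T => E T / W T) atTop (𝓝 0) := by
    rw [NormedAddCommGroup.tendsto_nhds_zero]
    intro ε hε
    have hε2 : 0 < ε / 2 := by linarith
    obtain ⟨T0', hT0'⟩ := ((Metric.tendsto_nhds.1 hlim (ε/2) hε2).and
      (eventually_ge_atTop (1:ℝ))).exists_forall_of_atTop
    set T0 : ℝ := max T0' 1 with hT0def
    have hT01 : (1:ℝ) ≤ T0 := le_max_right _ _
    have hbd : ∀ t, T0 ≤ t → |f t - K * w t| ≤ ε / 2 * w t := by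
      intro t ht
      have h1t : (1:ℝ) ≤ t := le_trans hT01 ht
      have := hT0' t (le_trans (le_max_left _ _) ht)
      have hwt := hwpos t h1t
      have hdist : |f t / w t - K| < ε / 2 := by
        simpa [Real.dist_eq] using this.1
      have heq : f t - K * w t = (f t / w t - K) * w t := by
        rw [sub_mul, div_mul_cancel₀ _ (ne_of_gt hwt)]
      rw [heq, abs_mul, abs_of_pos hwt]
      exact mul_le_mul_of_nonneg_right hdist.le hwt.le
    set C : ℝ := |E T0| with hCdef
    have hC0 : 0 ≤ C := abs_nonneg _
    have hEbd : ∀ T, T0 ≤ T → |E T| ≤ C + ε / 2 * W T := by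
      intro T hT
      have h1T : (1:ℝ) ≤ T := le_trans hT01 hT
      have hsplit : E T = E T0 + ∫ t in T0..T, (f t - K * w t) := by
        simp only [hEdef]
        exact (integral_add_adjacent_intervals (hgint le_rfl hT01) (hgint hT01 h1T)).symm
      have habs : |∫ t in T0..T, (f t - K * w t)| ≤ ∫ t in T0..T, ε / 2 * w t := by
        calc |∫ t in T0..T, (f t - K * w t)| ≤ ∫ t in T0..T, |f t - K * w t| :=
              intervalIntegral.abs_integral_le_integral_abs hT
          _ ≤ ∫ t in T0..T, ε / 2 * w t := by
              apply intervalIntegral.integral_mono_on hT ((hgint hT01 h1T).abs)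
                ((hwint hT01 h1T).const_mul _)
              intro t ht
              exact hbd t ht.1
      have hWsplit : (∫ t in T0..T, w t) = W T - W T0 := by
        simp only [hWdef]
        rw [eq_sub_iff_add_eq, add_comm]
        exact integral_add_adjacent_intervals (hwint le_rfl hT01) (hwint hT01 h1T)
      have hWT0 : 0 ≤ W T0 := by
        apply intervalIntegral.integral_nonneg hT01
        intro t ht
        exact (hwpos t ht.1).le
      have : (∫ t in T0..T, ε / 2 * w t) = ε/2 * (W T - W T0) := by
        rw [intervalIntegral.integral_const_mul, hWsplit]
      rw [this] at habs
      calc |E T| ≤ |E T0| + |∫ t in T0..T, (f t - K * w t)| := by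
            rw [hsplit]; exact abs_add_le _ _
        _ ≤ C + ε/2 * (W T - W T0) := by rw [hCdef]; linarith
        _ ≤ C + ε/2 * W T := by nlinarith
    have hWev : ∀ᶠ T in atTop, W T ≥ 2 * C / ε + 1 := hW.eventually_ge_atTop _
    filter_upwards [hWev, eventually_ge_atTop T0] with T hWT hT
    have hWpos : 0 < W T := by
      have : 0 ≤ 2 * C / ε := by positivity
      linarith
    have hkey : ε / 2 * (2 * C / ε + 1) = C + ε / 2 := by field_simp
    have h1 : |E T| ≤ C + ε/2 * W T := hEbd T hT
    rw [Real.norm_eq_abs, abs_div, abs_of_pos hWpos, div_lt_iff₀ hWpos]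
    have h2 : ε / 2 * W T ≥ C + ε / 2 := by
      calc ε / 2 * W T ≥ ε / 2 * (2 * C / ε + 1) := by
            apply mul_le_mul_of_nonneg_left hWT hε2.le
        _ = C + ε / 2 := hkey
    nlinarith
  have hfw : ∀ᶠ T in atTop, (∫ t in (1:ℝ)..T, f t) / W T = E T / W T + K := by
    filter_upwards [hW.eventually_gt_atTop 0, eventually_ge_atTop (1:ℝ)] with T hWT h1T
    have hEq : (∫ t in (1:ℝ)..T, f t) = E T + K * W T := by
      simp only [hEdef, hWdef]
      rw [← intervalIntegral.integral_const_mul,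
        ← intervalIntegral.integral_add (hgint le_rfl h1T) ((hwint le_rfl h1T).const_mul K)]
      congr 1; ext t; ring
    rw [hEq, add_div, mul_div_assoc, div_self (ne_of_gt hWT), mul_one]
  have := key.add (tendsto_const_nhds (x := K) (f := atTop))
  rw [zero_add] at this
  exact Tendsto.congr' (hfw.mono fun T h => h.symm) this

end RhoAux3

namespace RhoAux


/-- derivative of `u ↦ (1+u)^r` at `u` with `1 + u > 0`. -/
lemma hasDerivAt_one_add_rpow {r u : ℝ} (hu : 0 < 1 + u) :
    HasDerivAt (fun x : ℝ => (1 + x) ^ r) (r * (1 + u) ^ (r - 1)) u := by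
  have h := Real.hasDerivAt_rpow_const (x := 1 + u) (p := r) (Or.inl (ne_of_gt hu))
  have h2 : HasDerivAt (fun x : ℝ => 1 + x) 1 u := (hasDerivAt_id u).const_add 1
  simpa [mul_one, Function.comp_def] using h.comp u h2

lemma hasDerivAt_one_sub_rpow {r u : ℝ} (hu : 0 < 1 - u) :
    HasDerivAt (fun x : ℝ => (1 - x) ^ r) (-(r * (1 - u) ^ (r - 1))) u := by
  have h := Real.hasDerivAt_rpow_const (x := 1 - u) (p := r) (Or.inl (ne_of_gt hu))
  have h2 : HasDerivAt (fun x : ℝ => 1 - x) (-1) u := (hasDerivAt_id u).const_sub 1 |>.congr_deriv rfl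
  simpa [mul_comm, mul_neg, mul_one, Function.comp_def] using h.comp u h2

lemma cont_rpow_at_one (p : ℝ) :
    Tendsto (fun u : ℝ => (1 + u) ^ p) (𝓝[>] (0:ℝ)) (𝓝 1) := by
  have h : ContinuousAt (fun x : ℝ => x ^ p) 1 :=
    Real.continuousAt_rpow_const 1 p (Or.inl one_ne_zero)
  have h2 : Tendsto (fun u : ℝ => 1 + u) (𝓝[>] (0:ℝ)) (𝓝 1) := by
    have hco : Continuous (fun u : ℝ => 1 + u) := by continuity
    simpa using (hco.tendsto 0).mono_left nhdsWithin_le_nhds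
  simpa [Real.one_rpow, Function.comp_def] using (h.tendsto.comp h2)

lemma cont_rpow_at_one' (p : ℝ) :
    Tendsto (fun u : ℝ => (1 - u) ^ p) (𝓝[>] (0:ℝ)) (𝓝 1) := by
  have h : ContinuousAt (fun x : ℝ => x ^ p) 1 :=
    Real.continuousAt_rpow_const 1 p (Or.inl one_ne_zero)
  have h2 : Tendsto (fun u : ℝ => 1 - u) (𝓝[>] (0:ℝ)) (𝓝 1) := by
    have hco : Continuous (fun u : ℝ => 1 - u) := by continuity
    simpa using (hco.tendsto 0).mono_left nhdsWithin_le_nhds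
  simpa [Real.one_rpow, Function.comp_def] using (h.tendsto.comp h2)

/-- the central limit: `((1+u)^r + (1-u)^r - 2) / (2u²) → r(r-1)/2` as `u → 0⁺`. -/
lemma psi_limit {r : ℝ} :
    Tendsto (fun u : ℝ => ((1 + u) ^ r + (1 - u) ^ r - 2) / (2 * u ^ 2))
      (𝓝[>] (0:ℝ)) (𝓝 (r * (r - 1) / 2)) := by
  have hsmall : ∀ᶠ u in 𝓝[>] (0:ℝ), u ∈ Set.Ioo (0:ℝ) 1 := by
    apply Ioo_mem_nhdsGT_of_mem
    exact ⟨le_rfl, one_pos⟩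
  -- inner l'Hôpital: f' / (4u) → r(r-1)/2
  have inner : Tendsto (fun u : ℝ => (r * (1 + u) ^ (r-1) - r * (1 - u) ^ (r-1)) / (4 * u))
      (𝓝[>] (0:ℝ)) (𝓝 (r * (r - 1) / 2)) := by
    apply HasDerivAt.lhopital_zero_nhdsGT
      (f' := fun u => r * ((r-1) * (1 + u) ^ (r-1-1)) + r * ((r-1) * (1 - u) ^ (r-1-1)))
      (g' := fun _ => (4:ℝ))
    · filter_upwards [hsmall] with u hu
      have h1 := (hasDerivAt_one_add_rpow (r := r - 1) (by linarith [hu.1] : (0:ℝ) < 1 + u)).const_mul r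
      have h2 := (hasDerivAt_one_sub_rpow (r := r - 1) (by linarith [hu.2] : (0:ℝ) < 1 - u)).const_mul r
      simpa [mul_neg, sub_eq_add_neg, mul_assoc, Pi.add_def, Pi.neg_def] using h1.sub h2
    · filter_upwards with u
      simpa using (hasDerivAt_id u).const_mul (4:ℝ)
    · filter_upwards with u; norm_num
    · have h := ((cont_rpow_at_one (r-1)).sub (cont_rpow_at_one' (r-1))).const_mul r
      rw [sub_self, mul_zero] at h
      exact h.congr fun u => by ring
    · have hco : Continuous (fun u : ℝ => 4 * u) := by continuity
      simpa using (hco.tendsto 0).mono_left nhdsWithin_le_nhds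
    · have h1 := ((cont_rpow_at_one (r-1-1)).add (cont_rpow_at_one' (r-1-1)))
      have h2 := (h1.const_mul ((r-1))).const_mul r
      have h3 := h2.div_const 4
      have : r * ((r-1) * (1 + 1)) / 4 = r * (r-1) / 2 := by ring
      rw [this] at h3
      apply h3.congr
      intro u; ring
  apply HasDerivAt.lhopital_zero_nhdsGT
    (f' := fun u => r * (1 + u) ^ (r-1) - r * (1 - u) ^ (r-1)) (g' := fun u => 4 * u)
  · filter_upwards [hsmall] with u hu
    have h1 := hasDerivAt_one_add_rpow (r := r) (by linarith [hu.1] : (0:ℝ) < 1 + u)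
    have h2 := hasDerivAt_one_sub_rpow (r := r) (by linarith [hu.2] : (0:ℝ) < 1 - u)
    simpa [sub_eq_add_neg] using (h1.add h2).sub_const 2
  · filter_upwards with u
    have : HasDerivAt (fun x : ℝ => 2 * x ^ 2) (2 * (2 * u)) u := by
      simpa [mul_assoc] using ((hasDerivAt_pow 2 u).const_mul 2)
    simpa [show 2 * (2*u) = 4 * u by ring] using this
  · filter_upwards [hsmall] with u hu
    have : u ≠ 0 := ne_of_gt hu.1
    positivity
  · have := (cont_rpow_at_one r).add (cont_rpow_at_one' r)
    have h2 := this.sub_const 2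
    rw [show ((1:ℝ) + 1 - 2 : ℝ) = 0 by norm_num] at h2
    exact h2
  · have hco : Continuous (fun u : ℝ => 2 * u ^ 2) := by continuity
    simpa using (hco.tendsto 0).mono_left nhdsWithin_le_nhds
  · exact inner

/-- tail behavior: `g r t · t^(2-r) → r(r-1)/2` as `t → ∞`. -/
lemma g_tail {r : ℝ} (hr : 0 < r) :
    Tendsto (fun t : ℝ => g r t * t ^ (2 - r)) atTop (𝓝 (r * (r - 1) / 2)) := by
  have hcomp := psi_limit (r := r) |>.comp tendsto_inv_atTop_nhdsGT_zero
  apply hcomp.congr'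
  filter_upwards [eventually_gt_atTop (1:ℝ)] with t ht
  have ht0 : (0:ℝ) < t := lt_trans one_pos ht
  have hu0 : (0:ℝ) < 1/t := by positivity
  simp only [Function.comp]
  have e1 : (1 + t⁻¹) ^ r = (t + 1) ^ r / t ^ r := by
    rw [← Real.div_rpow (by linarith) ht0.le]
    congr 1; field_simp
  have e2 : (1 - t⁻¹) ^ r = (t - 1) ^ r / t ^ r := by
    rw [← Real.div_rpow (by linarith) ht0.le]
    congr 1; field_simp
  have e3 : (2:ℝ) = 2 * t ^ r / t ^ r := by
    rw [mul_div_assoc, div_self (ne_of_gt (Real.rpow_pos_of_pos ht0 r)), mul_one]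
  have habs : g r t = ((t+1) ^ r + (t-1) ^ r - 2 * t ^ r) / 2 := by
    unfold g
    rw [abs_of_pos (by linarith), abs_of_pos (by linarith), abs_of_pos ht0]
  have htr : (0:ℝ) < t ^ r := Real.rpow_pos_of_pos ht0 r
  have ht2r : (0:ℝ) < t ^ (2 - r) := Real.rpow_pos_of_pos ht0 _
  have hkey : t ^ r * t ^ (2 - r) = t ^ 2 := by
    rw [← Real.rpow_add ht0, show r + (2 - r) = 2 by ring]
    rw [show ((2:ℝ) = ((2:ℕ):ℝ)) by norm_num, Real.rpow_natCast]
  have hti : (t⁻¹ : ℝ) ^ 2 = (t ^ 2)⁻¹ := by rw [inv_pow]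
  rw [habs, e1, e2, hti]
  rw [div_eq_iff (by positivity : (2:ℝ) * (t ^ 2)⁻¹ ≠ 0)]
  have ht2 : (t:ℝ) ^ 2 ≠ 0 := by positivity
  field_simp
  rw [← hkey]
  ring

end RhoAux

namespace RhoAux5

/-- Dominated convergence: `∫_0^{c/h} (c-ht)G(t) dt → c ∫_{(0,∞)} G` as `h → 0⁺`. -/
lemma main_h {G : ℝ → ℝ} (hGc : Continuous G) (hG0 : ∀ t, 0 ≤ G t)
    (hGint : IntegrableOn G (Set.Ioi 0)) {c : ℝ} (hc : 0 < c) :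
    Tendsto (fun h : ℝ => ∫ t in (0:ℝ)..(c/h), (c - h*t) * G t)
      (𝓝[>] (0:ℝ)) (𝓝 (c * ∫ t in Set.Ioi 0, G t)) := by
  set F : ℝ → ℝ → ℝ := fun h => Set.indicator (Set.Ioc 0 (c/h)) (fun t => (c - h*t) * G t)
    with hFdef
  have heq : ∀ᶠ h in 𝓝[>] (0:ℝ),
      (∫ t in (0:ℝ)..(c/h), (c - h*t) * G t) = ∫ t in Set.Ioi 0, F h t := by
    filter_upwards [self_mem_nhdsWithin] with h (hh : 0 < h)
    have hch : 0 ≤ c / h := by positivity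
    rw [intervalIntegral.integral_of_le hch, hFdef]
    rw [setIntegral_indicator measurableSet_Ioc]
    congr 1
    rw [Set.inter_eq_self_of_subset_right (Set.Ioc_subset_Ioi_self)]
  have hlim : Tendsto (fun h => ∫ t in Set.Ioi 0, F h t) (𝓝[>] (0:ℝ))
      (𝓝 (∫ t in Set.Ioi 0, c * G t)) := by
    apply MeasureTheory.tendsto_integral_filter_of_dominated_convergence (fun t => c * G t)
    · filter_upwards with h
      exact (((continuous_const.sub (continuous_const.mul continuous_id)).mul hGc).aestronglyMeasurable).indicator
        measurableSet_Ioc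
    · filter_upwards [self_mem_nhdsWithin] with h (hh : 0 < h)
      rw [ae_restrict_iff' measurableSet_Ioi]
      filter_upwards with t ht
      rw [hFdef]
      beta_reduce
      by_cases hmem : t ∈ Set.Ioc 0 (c/h)
      · rw [Set.indicator_of_mem hmem]
        have h1 : h * t ≤ c := by
          rw [mul_comm, ← le_div_iff₀ hh]
          exact hmem.2
        have h2 : 0 ≤ c - h * t := by linarith
        rw [Real.norm_eq_abs, abs_mul, abs_of_nonneg h2, abs_of_nonneg (hG0 t)]
        apply mul_le_mul_of_nonneg_right _ (hG0 t)
        nlinarith [hmem.1]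
      · rw [Set.indicator_of_notMem hmem]
        simp only [norm_zero]
        exact mul_nonneg hc.le (hG0 t)
    · exact hGint.const_mul c
    · rw [ae_restrict_iff' measurableSet_Ioi]
      filter_upwards with t (ht : 0 < t)
      have hev : ∀ᶠ h in 𝓝[>] (0:ℝ), F h t = (c - h*t) * G t := by
        filter_upwards [Ioo_mem_nhdsGT_of_mem
          (Set.mem_Ico.2 ⟨le_rfl, (by positivity : (0:ℝ) < c/t)⟩)] with h hh
        obtain ⟨hh0, hhlt⟩ := hh
        have : t ∈ Set.Ioc 0 (c/h) := by
          constructor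
          · exact ht
          · rw [le_div_iff₀ hh0]
            have := (lt_div_iff₀ ht).1 hhlt
            nlinarith
        rw [hFdef]
        beta_reduce
        rw [Set.indicator_of_mem this]
      have hcont : Tendsto (fun h : ℝ => (c - h*t) * G t) (𝓝[>] (0:ℝ)) (𝓝 (c * G t)) := by
        have hco : Continuous (fun h : ℝ => (c - h*t) * G t) := by continuity
        have := (hco.tendsto 0).mono_left (nhdsWithin_le_nhds (s := Set.Ioi (0:ℝ)))
        simpa using this
      exact hcont.congr' (hev.mono fun h h' => h'.symm)
  rw [MeasureTheory.integral_const_mul] at hlim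
  exact hlim.congr' (heq.mono fun h h' => h'.symm)

end RhoAux5

namespace RhoAux


def G (r : ℝ) (k : ℕ) (t : ℝ) : ℝ := |g r t| ^ k

lemma G_cont {r : ℝ} (hr : 0 < r) (k : ℕ) : Continuous (G r k) :=
  ((g_cont hr).abs).pow k

lemma G_nonneg (r : ℝ) (k : ℕ) (t : ℝ) : 0 ≤ G r k t := pow_nonneg (abs_nonneg _) k

lemma G_tail {r : ℝ} (hr : 0 < r) (k : ℕ) :
    Tendsto (fun t : ℝ => G r k t * t ^ ((2 - r) * k)) atTop
      (𝓝 (|r * (r - 1) / 2| ^ k)) := by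
  have h := ((g_tail hr).abs).pow k
  apply h.congr'
  filter_upwards [eventually_gt_atTop (0:ℝ)] with t ht0
  have e : t ^ ((2 - r) * (k:ℝ)) = (t ^ (2 - r)) ^ k := by
    rw [Real.rpow_mul ht0.le, Real.rpow_natCast]
  rw [abs_mul, mul_pow, abs_of_pos (Real.rpow_pos_of_pos ht0 _), G, e]

lemma G_integrable {r : ℝ} (hr : 0 < r) {k : ℕ} (hk : 1 < (2 - r) * k) :
    IntegrableOn (G r k) (Set.Ioi 0) := by
  set Kk : ℝ := |r * (r - 1) / 2| ^ k
  obtain ⟨T0, hT0⟩ := ((G_tail hr k).eventually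
    (eventually_le_nhds (lt_add_one Kk))).exists_forall_of_atTop
  set T1 : ℝ := max T0 1 with hT1def
  have hT1pos : (0:ℝ) < T1 := lt_of_lt_of_le one_pos (le_max_right _ _)
  have h1 : IntegrableOn (G r k) (Set.Ioc 0 T1) :=
    (G_cont hr k).integrableOn_Icc.mono_set Set.Ioc_subset_Icc_self
  have h2 : IntegrableOn (G r k) (Set.Ioi T1) := by
    apply Integrable.mono'
      (g := fun t => (Kk + 1) * t ^ (-((2 - r) * (k:ℝ))))
    · exact (((integrableOn_Ioi_rpow_of_lt (by linarith) hT1pos)).const_mul _)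
    · exact ((G_cont hr k).aestronglyMeasurable).restrict
    · rw [ae_restrict_iff' measurableSet_Ioi]
      filter_upwards with t (ht : T1 < t)
      have ht0 : (0:ℝ) < t := lt_trans hT1pos ht
      have htα : (0:ℝ) < t ^ ((2 - r) * (k:ℝ)) := Real.rpow_pos_of_pos ht0 _
      have hb := hT0 t (le_trans (le_max_left _ _) ht.le)
      rw [Real.norm_eq_abs, abs_of_nonneg (G_nonneg r k t), Real.rpow_neg ht0.le,
        ← div_eq_mul_inv, le_div_iff₀ htα]
      exact hb
  have := h1.union h2
  rwa [Set.Ioc_union_Ioi_eq_Ioi hT1pos.le] at this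

lemma G_pos_integral {r : ℝ} (hr : 0 < r) {k : ℕ}
    (hGint : IntegrableOn (G r k) (Set.Ioi 0)) :
    0 < ∫ t in Set.Ioi (0:ℝ), G r k t := by
  have hG0 : G r k 0 = 1 := by rw [G, g_zero hr, abs_one, one_pow]
  have hcont : ContinuousAt (G r k) 0 := (G_cont hr k).continuousAt
  rw [Metric.continuousAt_iff] at hcont
  obtain ⟨δ, hδ, hδ2⟩ := hcont (1/2) (by norm_num)
  set s : Set ℝ := Set.Ioc 0 (δ/2) with hsdef
  have hlow : ∀ x ∈ s, (1:ℝ)/2 ≤ G r k x := by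
    intro x hx
    have : dist x 0 < δ := by
      rw [Real.dist_eq, sub_zero, abs_of_pos hx.1]
      linarith [hx.2, hδ]
    have := hδ2 this
    rw [hG0, Real.dist_eq] at this
    have := abs_lt.1 this
    linarith [this.1]
  have hs_meas : MeasurableSet s := measurableSet_Ioc
  have hvol : (volume s) ≠ ⊤ := by
    rw [hsdef, Real.volume_Ioc]
    exact ENNReal.ofReal_ne_top
  have hkey := MeasureTheory.setIntegral_ge_of_const_le hs_meas hvol hlow
    (hGint.mono_set (by rw [hsdef]; exact Set.Ioc_subset_Ioi_self))
  have hmono : (∫ t in s, G r k t) ≤ ∫ t in Set.Ioi (0:ℝ), G r k t := by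
    apply setIntegral_mono_set hGint
    · filter_upwards with t; exact G_nonneg r k t
    · exact HasSubset.Subset.eventuallyLE (by rw [hsdef]; exact Set.Ioc_subset_Ioi_self)
  have hvolval : (volume s).toReal = δ/2 := by
    rw [hsdef, Real.volume_Ioc, ENNReal.toReal_ofReal (by linarith)]
    ring
  rw [measureReal_def, hvolval, smul_eq_mul] at hkey
  have : (0:ℝ) < 1/2 * (δ/2) := by positivity
  linarith

/-- Karamata: if `f(t)/t^p → K` with `p > -1` then `(∫_0^T f)/T^{p+1} → K/(p+1)`. -/
lemma karamata {f : ℝ → ℝ} (hf : Continuous f) {p K : ℝ} (hp : -1 < p)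
    (hlim : Tendsto (fun t => f t / t ^ p) atTop (𝓝 K)) :
    Tendsto (fun T => (∫ t in (0:ℝ)..T, f t) / T ^ (p + 1)) atTop (𝓝 (K / (p + 1))) := by
  have hp1 : (0:ℝ) < p + 1 := by linarith
  have hwc : ContinuousOn (fun t : ℝ => t ^ p) (Set.Ici 1) := by
    intro t ht
    exact (Real.continuousAt_rpow_const t p (Or.inl (by
      intro h; rw [h] at ht; exact absurd ht (by norm_num)))).continuousWithinAt
  have hwpos : ∀ t : ℝ, 1 ≤ t → 0 < t ^ p := fun t ht => Real.rpow_pos_of_pos (by linarith) p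
  have hWval : ∀ T : ℝ, (∫ t in (1:ℝ)..T, t ^ p) = (T ^ (p+1) - 1) / (p+1) := by
    intro T
    rw [integral_rpow (Or.inl hp)]
    norm_num
  have hW : Tendsto (fun T => ∫ t in (1:ℝ)..T, t ^ p) atTop atTop := by
    apply Tendsto.congr' (Eventually.of_forall fun T => (hWval T).symm)
    apply Tendsto.atTop_div_const hp1
    exact (tendsto_rpow_atTop hp1).atTop_add tendsto_const_nhds
  have hces := RhoAux3.cesaro hf hwc hwpos hW hlim
  -- (∫_1^T f)/T^{p+1} → K/(p+1)
  have hWratio : Tendsto (fun T => (∫ t in (1:ℝ)..T, t ^ p) / T ^ (p+1)) atTop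
      (𝓝 (1 / (p+1))) := by
    have h1 : Tendsto (fun T : ℝ => (1 - (T ^ (p+1))⁻¹) / (p+1)) atTop (𝓝 (1/(p+1))) := by
      have := ((tendsto_rpow_atTop hp1).inv_tendsto_atTop)
      have h2 := (tendsto_const_nhds (x := (1:ℝ)) (f := atTop)).sub this
      rw [sub_zero] at h2
      exact h2.div_const _
    apply h1.congr'
    filter_upwards [eventually_gt_atTop (0:ℝ)] with T hT
    have hTp : (0:ℝ) < T ^ (p+1) := Real.rpow_pos_of_pos hT _
    rw [hWval]
    have e : (T ^ (p+1) - 1)/(p+1)/T^(p+1) = (1 - (T^(p+1))⁻¹)/(p+1) := by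
      rw [div_right_comm, sub_div, div_self (ne_of_gt hTp), one_div]
    exact e.symm
  have hmain : Tendsto (fun T => (∫ t in (1:ℝ)..T, f t) / T ^ (p+1)) atTop
      (𝓝 (K / (p+1))) := by
    have := hces.mul hWratio
    rw [show K * (1/(p+1)) = K / (p+1) by ring] at this
    apply this.congr'
    filter_upwards [hW.eventually_gt_atTop 0] with T hWT
    field_simp
  have hzero : Tendsto (fun T : ℝ => (∫ t in (0:ℝ)..(1:ℝ), f t) / T ^ (p+1)) atTop (𝓝 0) :=
    Tendsto.div_atTop tendsto_const_nhds (tendsto_rpow_atTop hp1)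
  have := hzero.add hmain
  rw [zero_add] at this
  apply this.congr'
  filter_upwards [eventually_ge_atTop (1:ℝ)] with T hT
  rw [← add_div]
  congr 1
  exact integral_add_adjacent_intervals (hf.intervalIntegrable _ _) (hf.intervalIntegrable _ _)

/-- Karamata, log case: if `f(t)·t → K` then `(∫_0^T f)/log T → K`. -/
lemma karamata_log {f : ℝ → ℝ} (hf : Continuous f) {K : ℝ}
    (hlim : Tendsto (fun t => f t * t) atTop (𝓝 K)) :
    Tendsto (fun T => (∫ t in (0:ℝ)..T, f t) / Real.log T) atTop (𝓝 K) := by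
  have hwc : ContinuousOn (fun t : ℝ => t⁻¹) (Set.Ici 1) := by
    apply ContinuousOn.inv₀ continuousOn_id
    intro t ht
    exact ne_of_gt (lt_of_lt_of_le one_pos ht)
  have hwpos : ∀ t : ℝ, 1 ≤ t → 0 < t⁻¹ := fun t ht => by positivity
  have hWval : ∀ᶠ T in atTop, (∫ t in (1:ℝ)..T, t⁻¹) = Real.log T := by
    filter_upwards [eventually_ge_atTop (1:ℝ)] with T hT
    rw [integral_inv (by
      intro h
      rw [Set.mem_uIcc] at h
      rcases h with h | h <;> linarith [h.1, h.2])]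
    simp
  have hW : Tendsto (fun T => ∫ t in (1:ℝ)..T, t⁻¹) atTop atTop :=
    Tendsto.congr' (hWval.mono fun T h => h.symm) Real.tendsto_log_atTop
  have hflim : Tendsto (fun t => f t / t⁻¹) atTop (𝓝 K) := by
    apply hlim.congr'
    filter_upwards [eventually_gt_atTop (0:ℝ)] with t ht
    field_simp
  have hces := RhoAux3.cesaro hf hwc hwpos hW hflim
  have hmain : Tendsto (fun T => (∫ t in (1:ℝ)..T, f t) / Real.log T) atTop (𝓝 K) := by
    apply hces.congr'
    filter_upwards [hWval] with T h
    rw [h]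
  have hzero : Tendsto (fun T : ℝ => (∫ t in (0:ℝ)..(1:ℝ), f t) / Real.log T) atTop (𝓝 0) :=
    Tendsto.div_atTop tendsto_const_nhds Real.tendsto_log_atTop
  have := hzero.add hmain
  rw [zero_add] at this
  apply this.congr'
  filter_upwards [eventually_ge_atTop (1:ℝ)] with T hT
  rw [← add_div]
  congr 1
  exact integral_add_adjacent_intervals (hf.intervalIntegrable _ _) (hf.intervalIntegrable _ _)
end RhoAux

namespace RhoAux

lemma G_even (r : ℝ) (k : ℕ) (t : ℝ) : G r k (-t) = G r k t := by
  rw [G, G, g_even]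

lemma G_one_eq {k : ℕ} {t : ℝ} (ht : 0 ≤ t) : G 1 k t = (max (1 - t) 0) ^ k := by
  rw [G, g_one ht, abs_of_nonneg (le_max_right _ _)]

lemma G_one_zero {k : ℕ} (hk : 1 ≤ k) {t : ℝ} (ht : 1 ≤ t) : G 1 k t = 0 := by
  rw [G_one_eq (by linarith), max_eq_right (by linarith), zero_pow (by omega)]

lemma G_one_integrable {k : ℕ} (hk : 1 ≤ k) : IntegrableOn (G 1 k) (Set.Ioi 0) := by
  have h1 : IntegrableOn (G 1 k) (Set.Ioc 0 1) :=
    (G_cont one_pos k).integrableOn_Icc.mono_set Set.Ioc_subset_Icc_self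
  have h2 : IntegrableOn (G 1 k) (Set.Ioi 1) := by
    refine (integrableOn_congr_fun ?_ measurableSet_Ioi).2 (integrableOn_zero)
    intro t (ht : t ∈ Set.Ioi 1)
    exact G_one_zero hk (le_of_lt ht)
  have := h1.union h2
  rwa [Set.Ioc_union_Ioi_eq_Ioi zero_le_one] at this

lemma G_one_integral {k : ℕ} (hk : 1 ≤ k) :
    (∫ t in Set.Ioi (0:ℝ), G 1 k t) = 1 / ((k:ℝ) + 1) := by
  have h1 : IntegrableOn (G 1 k) (Set.Ioc 0 1) :=
    (G_cont one_pos k).integrableOn_Icc.mono_set Set.Ioc_subset_Icc_self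
  have h2 : IntegrableOn (G 1 k) (Set.Ioi 1) :=
    (G_one_integrable hk).mono_set (Set.Ioi_subset_Ioi zero_le_one)
  rw [← Set.Ioc_union_Ioi_eq_Ioi zero_le_one,
    MeasureTheory.setIntegral_union (Set.Ioc_disjoint_Ioi le_rfl) measurableSet_Ioi h1 h2]
  have e2 : (∫ t in Set.Ioi (1:ℝ), G 1 k t) = 0 :=
    setIntegral_eq_zero_of_forall_eq_zero fun t ht => G_one_zero hk (le_of_lt ht)
  have e1 : (∫ t in Set.Ioc (0:ℝ) 1, G 1 k t) = ∫ t in (0:ℝ)..1, G 1 k t :=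
    (intervalIntegral.integral_of_le zero_le_one).symm
  have e3 : (∫ t in (0:ℝ)..1, G 1 k t) = ∫ t in (0:ℝ)..1, (1 - t) ^ k := by
    apply integral_congr
    intro t ht
    rw [Set.uIcc_of_le zero_le_one] at ht
    rw [G_one_eq ht.1, max_eq_left (by linarith [ht.2])]
  have e4 : (∫ t in (0:ℝ)..1, ((1:ℝ) - t) ^ k) = 1 / ((k:ℝ) + 1) := by
    have h := intervalIntegral.integral_comp_sub_left (a := (0:ℝ)) (b := 1)
      (fun s : ℝ => s ^ k) 1
    norm_num at h
    rw [h, one_div]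
  rw [e1, e2, e3, e4, add_zero]

end RhoAux

lemma algebra_value_i {K X α : ℝ} (hK : K ≠ 0) (hX : X ≠ 0)
    (h1 : 1 - α ≠ 0) (h2 : 2 - α ≠ 0) :
    2 * X / (2 * K * X / ((1 - α) * (2 - α))) * (K / (-α + 1))
      - 2 * X / (2 * K * X / ((1 - α) * (2 - α))) * (K / ((1 - α) + 1)) = 1 := by
  have h1' : -α + 1 ≠ 0 := by intro h; apply h1; linarith
  have h2' : (1 - α) + 1 ≠ 0 := by intro h; apply h2; linarith
  field_simp
  ring

lemma algebra_i {c h α D A' B' : ℝ} (hh : 0 < h) (hc : 0 < c) (hD : D ≠ 0) :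
    2 * c ^ (2 - α) / D * (A' / (c / h) ^ (-α + 1))
      - 2 * c ^ (2 - α) / D * (B' / (c / h) ^ ((1 - α) + 1))
      = 2 * (h * (c * A' - h * B')) / (D * h ^ α) := by
  have e1 : (c/h) ^ (-α + 1) = c ^ (-α + 1) / h ^ (-α + 1) := Real.div_rpow hc.le hh.le _
  have e2 : (c/h) ^ ((1 - α) + 1) = c ^ ((1 - α) + 1) / h ^ ((1 - α) + 1) :=
    Real.div_rpow hc.le hh.le _
  have eh1 : h ^ (-α + 1) = h / h ^ α := by
    rw [show -α + 1 = 1 - α by ring, Real.rpow_sub hh, Real.rpow_one]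
  have eh2 : h ^ ((1 - α) + 1) = h * h / h ^ α := by
    rw [show (1 - α) + 1 = 2 - α by ring, Real.rpow_sub hh,
      show ((2:ℝ) = ((2:ℕ):ℝ)) by norm_num, Real.rpow_natCast]
    ring_nf
  have ec1 : c ^ ((2:ℝ) - α) = c ^ (-α + 1) * c := by
    rw [show (2:ℝ) - α = (-α + 1) + 1 by ring, Real.rpow_add hc, Real.rpow_one]
  have ec2 : c ^ ((1 - α) + 1) = c ^ ((2:ℝ) - α) := by
    rw [show (1 - α) + 1 = 2 - α by ring]
  have hhα : (0:ℝ) < h ^ α := Real.rpow_pos_of_pos hh _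
  have hcα : (0:ℝ) < c ^ (-α + 1) := Real.rpow_pos_of_pos hc _
  rw [e1, e2, eh1, eh2, ec2, ec1]
  field_simp

lemma algebra_iii {c h D A' B' L M : ℝ} (hh : 0 < h) (hc : 0 < c) (hD : D ≠ 0)
    (hL : L ≠ 0) (hM : M ≠ 0) :
    2 * c / D * (A' / M * (M / L)) - 2 / D * (c * (B' / (c / h)) * L⁻¹)
      = 2 * (h * (c * A' - h * B')) / (D * h * L) := by
  have hch : c / h ≠ 0 := by positivity
  field_simp


open RhoAux

/-- **Corollary 4.1.** Let `σ²(h) = h^r`, `0 < r ≤ 2`, `a < b`, `c = b − a`, `k ≥ 1`.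
There exist finite positive constants `D = D(r,k,c)`, independent of `h`, such that,
as `h ↓ 0`:
(i) if `(2−r)k < 1`, `∫_a^b∫_a^b |ρ_h(x−y)|^k dx dy ∼ D h^{(2−r)k}`;
(ii) if `r = 1`, `∫∫|ρ_h|^k ∼ (2c/(k+1)) h`;
(iii) if `(2−r)k = 1`, `k ≥ 2`, `∫∫|ρ_h|^k ∼ D h log(1/h)`;
(iv) if `(2−r)k > 1`, `∫∫|ρ_h|^k ∼ D h`. -/
theorem rhoPow_double_integral_asymptotics (r a b c : ℝ) (hr : 0 < r) (hr2 : r ≤ 2)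
    (hab : a < b) (hc : c = b - a) (k : ℕ) (hk : 1 ≤ k) :
    ((2 - r) * k < 1 →
      ∃ D : ℝ, 0 < D ∧
        Tendsto (fun h : ℝ => (∫ x in a..b, ∫ y in a..b, |rhoPow r h (x - y)| ^ k) /
            (D * h ^ ((2 - r) * k)))
          (𝓝[>] (0:ℝ)) (𝓝 1)) ∧
    (r = 1 →
      Tendsto (fun h : ℝ => (∫ x in a..b, ∫ y in a..b, |rhoPow r h (x - y)| ^ k) /
          (2 * c / (k + 1) * h))
        (𝓝[>] (0:ℝ)) (𝓝 1)) ∧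
    ((2 - r) * k = 1 → 2 ≤ k →
      ∃ D : ℝ, 0 < D ∧
        Tendsto (fun h : ℝ => (∫ x in a..b, ∫ y in a..b, |rhoPow r h (x - y)| ^ k) /
            (D * h * Real.log (1 / h)))
          (𝓝[>] (0:ℝ)) (𝓝 1)) ∧
    (1 < (2 - r) * k →
      ∃ D : ℝ, 0 < D ∧
        Tendsto (fun h : ℝ => (∫ x in a..b, ∫ y in a..b, |rhoPow r h (x - y)| ^ k) /
            (D * h))
          (𝓝[>] (0:ℝ)) (𝓝 1)) := by
  have hc0 : 0 < c := by rw [hc]; linarith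
  have hk1 : (1:ℝ) ≤ (k:ℝ) := by exact_mod_cast hk
  set P : ℝ → ℝ := fun h => ∫ x in a..b, ∫ y in a..b, |rhoPow r h (x - y)| ^ k with hPdef
  set Gf : ℝ → ℝ := G r k with hGfdef
  have hGc : Continuous Gf := G_cont hr k
  set Q : ℝ → ℝ := fun h => ∫ t in (0:ℝ)..(c/h), (c - h*t) * Gf t with hQdef
  -- master identity
  have master : ∀ᶠ h in 𝓝[>] (0:ℝ), P h = 2 * (h * Q h) := by
    filter_upwards [self_mem_nhdsWithin] with h (hh : 0 < h)
    have hFc : Continuous (fun s : ℝ => Gf (s/h)) := hGc.comp (continuous_id.div_const h)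
    have hFe : ∀ s : ℝ, (fun s : ℝ => Gf (s/h)) (-s) = (fun s : ℝ => Gf (s/h)) s := by
      intro s
      simp only [hGfdef]
      rw [neg_div, G_even]
    have h1 : P h = ∫ x in a..b, ∫ y in a..b, (fun s : ℝ => Gf (s/h)) (x - y) := by
      rw [hPdef]
      apply integral_congr
      intro x _
      apply integral_congr
      intro y _
      simp only [hGfdef, G]
      rw [rhoPow_eq_g hh]
    rw [h1, RhoAux2.double_to_single hFc hFe hab.le, ← hc]
    congr 1
    have h2 : (∫ s in (0:ℝ)..c, (c - s) * Gf (s/h))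
        = ∫ s in (0:ℝ)..c, (fun t => (c - h*t) * Gf t) (s/h) := by
      apply integral_congr
      intro s _
      have hs : h * (s/h) = s := by field_simp
      simp only [hs]
    have h3 := intervalIntegral.integral_comp_div (a := (0:ℝ)) (b := c)
      (f := fun t => (c - h*t) * Gf t) (c := h) (ne_of_gt hh)
    rw [h2, h3, zero_div, smul_eq_mul]
  -- helper for cases (ii) and (iv)
  have case24 : ∀ M : ℝ, 0 < M → IntegrableOn Gf (Set.Ioi 0) →
      (∫ t in Set.Ioi (0:ℝ), Gf t) = M →
      Tendsto (fun h : ℝ => P h / (2 * c * M * h)) (𝓝[>] (0:ℝ)) (𝓝 1) := by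
    intro M hM hint hval
    have hQ := RhoAux5.main_h hGc (fun t => G_nonneg r k t) hint hc0
    rw [hval] at hQ
    have hlim := hQ.div_const (c * M)
    rw [div_self (ne_of_gt (mul_pos hc0 hM))] at hlim
    apply hlim.congr'
    filter_upwards [master, self_mem_nhdsWithin] with h hm (hh : 0 < h)
    show Q h / (c * M) = P h / (2 * c * M * h)
    rw [hm]
    rw [div_eq_div_iff (ne_of_gt (mul_pos hc0 hM)) (by positivity)]
    ring
  refine ⟨?_, ?_, ?_, ?_⟩
  · -- case (i)
    intro hα1
    rcases eq_or_lt_of_le hr2 with hr2e | hr2l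
    · -- r = 2
      subst hr2e
      refine ⟨c^2, by positivity, ?_⟩
      have hPval : ∀ᶠ h in 𝓝[>] (0:ℝ), P h = c^2 := by
        filter_upwards [self_mem_nhdsWithin] with h (hh : 0 < h)
        have hone : ∀ x y : ℝ, |rhoPow 2 h (x - y)| ^ k = 1 := by
          intro x y
          rw [rhoPow_eq_g hh, g_two, abs_one, one_pow]
        show (∫ x in a..b, ∫ y in a..b, |rhoPow 2 h (x - y)| ^ k) = c^2
        calc (∫ x in a..b, ∫ y in a..b, |rhoPow 2 h (x - y)| ^ k)
            = ∫ x in a..b, ∫ y in a..b, (1:ℝ) := by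
              apply integral_congr
              intro x _
              apply integral_congr
              intro y _
              exact hone x y
          _ = c^2 := by
              simp only [intervalIntegral.integral_const, smul_eq_mul, mul_one]
              rw [hc]; ring
      have hev : ∀ᶠ h in 𝓝[>] (0:ℝ), (1:ℝ) = P h / (c^2 * h ^ ((2 - 2) * (k:ℝ))) := by
        filter_upwards [hPval] with h hP
        rw [hP, show ((2:ℝ) - 2) * (k:ℝ) = 0 by ring, Real.rpow_zero, mul_one,
          div_self (by positivity : (c:ℝ)^2 ≠ 0)]
      exact tendsto_const_nhds.congr' hev
    · -- r < 2
      set α : ℝ := (2 - r) * k with hαdef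
      have hα0 : 0 < α := mul_pos (by linarith) (by linarith : (0:ℝ) < (k:ℝ))
      have hαlt : α < 1 := hα1
      have hr1 : 1 < r := by
        by_contra hcon
        push_neg at hcon
        have h1 : (1:ℝ) ≤ 2 - r := by linarith
        have h2 : (2 - r) ≤ (2 - r) * k := le_mul_of_one_le_right (by linarith) hk1
        have : (1:ℝ) ≤ α := by rw [hαdef]; linarith
        linarith
      set K : ℝ := |r * (r - 1) / 2| ^ k with hKdef
      have hK0 : 0 < K := by
        apply pow_pos
        rw [abs_pos]
        have : 0 < r * (r - 1) / 2 := by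
          apply div_pos (mul_pos hr (by linarith)) two_pos
        exact ne_of_gt this
      have hGt : Tendsto (fun t : ℝ => Gf t * t ^ α) atTop (𝓝 K) := G_tail hr k
      set A : ℝ → ℝ := fun T => ∫ t in (0:ℝ)..T, Gf t with hAdef
      set B : ℝ → ℝ := fun T => ∫ t in (0:ℝ)..T, t * Gf t with hBdef
      have hKA : Tendsto (fun T => A T / T ^ (-α + 1)) atTop (𝓝 (K / (-α + 1))) := by
        apply karamata hGc (by linarith : (-1:ℝ) < -α)
        apply hGt.congr'
        filter_upwards [eventually_gt_atTop (0:ℝ)] with t ht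
        rw [Real.rpow_neg ht.le, div_inv_eq_mul]
      have hKB : Tendsto (fun T => B T / T ^ ((1 - α) + 1)) atTop
          (𝓝 (K / ((1 - α) + 1))) := by
        apply karamata (continuous_id.mul hGc) (by linarith : (-1:ℝ) < 1 - α)
        apply hGt.congr'
        filter_upwards [eventually_gt_atTop (0:ℝ)] with t ht
        have htpos : (0:ℝ) < t ^ (1 - α) := Real.rpow_pos_of_pos ht _
        rw [eq_div_iff (ne_of_gt htpos), mul_assoc, ← Real.rpow_add ht,
          show α + (1 - α) = 1 by ring, Real.rpow_one]
        simp only [Pi.mul_apply, id_eq]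
        ring
      set D : ℝ := 2 * K * c ^ (2 - α) / ((1 - α) * (2 - α)) with hDdef
      have h1α : (0:ℝ) < 1 - α := by linarith
      have h2α : (0:ℝ) < 2 - α := by linarith
      have hcp : (0:ℝ) < c ^ (2 - α) := Real.rpow_pos_of_pos hc0 _
      have hD0 : 0 < D := by rw [hDdef]; positivity
      refine ⟨D, hD0, ?_⟩
      have hT : Tendsto (fun h : ℝ => c / h) (𝓝[>] (0:ℝ)) atTop := by
        apply Tendsto.congr (fun h => (div_eq_mul_inv c h).symm)
        exact tendsto_inv_nhdsGT_zero.const_mul_atTop hc0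
      have cA := hKA.comp hT
      have cB := hKB.comp hT
      have hval := (cA.const_mul (2 * c ^ (2 - α) / D)).sub
        (cB.const_mul (2 * c ^ (2 - α) / D))
      have hvalue : 2 * c ^ (2 - α) / D * (K / (-α + 1))
          - 2 * c ^ (2 - α) / D * (K / ((1 - α) + 1)) = 1 := by
        rw [hDdef]
        exact algebra_value_i (ne_of_gt hK0) (ne_of_gt hcp) (ne_of_gt h1α) (ne_of_gt h2α)
      rw [hvalue] at hval
      apply hval.congr'
      filter_upwards [master, self_mem_nhdsWithin] with h hm (hh : 0 < h)
      simp only [Function.comp]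
      have hQs : Q h = c * A (c/h) - h * B (c/h) := by
        show (∫ t in (0:ℝ)..(c/h), (c - h*t) * Gf t) = _
        calc (∫ t in (0:ℝ)..(c/h), (c - h*t) * Gf t)
            = ∫ t in (0:ℝ)..(c/h), (c * Gf t - h * (t * Gf t)) :=
              intervalIntegral.integral_congr fun t _ => by ring
          _ = (∫ t in (0:ℝ)..(c/h), c * Gf t) - ∫ t in (0:ℝ)..(c/h), h * (t * Gf t) :=
              intervalIntegral.integral_sub ((continuous_const.mul hGc).intervalIntegrable _ _)
                ((continuous_const.mul (continuous_id.mul hGc)).intervalIntegrable _ _)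
          _ = c * A (c/h) - h * B (c/h) := by
              rw [intervalIntegral.integral_const_mul, intervalIntegral.integral_const_mul]
      have hm' : (∫ x in a..b, ∫ y in a..b, |rhoPow r h (x - y)| ^ k) = 2 * (h * Q h) := hm
      rw [hm', hQs]
      exact algebra_i hh hc0 (ne_of_gt hD0)

  · -- case (ii) r = 1
    intro hre
    subst hre
    have h24 := case24 (1/((k:ℝ)+1)) (by positivity) (G_one_integrable hk) (G_one_integral hk)
    have heq : (2:ℝ) * c * (1/((k:ℝ)+1)) = 2 * c / ((k:ℝ)+1) := by ring
    rw [heq] at h24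
    exact h24
  · -- case (iii)
    intro hα hk2
    have hk2' : (2:ℝ) ≤ (k:ℝ) := by exact_mod_cast hk2
    have hr1 : 1 < r := by nlinarith
    have hrlt2 : r < 2 := by nlinarith
    set K : ℝ := |r * (r - 1) / 2| ^ k with hKdef
    have hK0 : 0 < K := by
      apply pow_pos
      rw [abs_pos]
      exact ne_of_gt (div_pos (mul_pos hr (by linarith)) two_pos)
    have hGt : Tendsto (fun t : ℝ => Gf t * t ^ ((2 - r) * (k:ℝ))) atTop (𝓝 K) :=
      G_tail hr k
    have hGt1 : Tendsto (fun t : ℝ => Gf t * t) atTop (𝓝 K) := by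
      apply hGt.congr'
      filter_upwards [eventually_gt_atTop (0:ℝ)] with t ht
      rw [hα, Real.rpow_one]
    set A : ℝ → ℝ := fun T => ∫ t in (0:ℝ)..T, Gf t with hAdef
    set B : ℝ → ℝ := fun T => ∫ t in (0:ℝ)..T, t * Gf t with hBdef
    have kal : Tendsto (fun T => A T / Real.log T) atTop (𝓝 K) :=
      karamata_log hGc hGt1
    have kB : Tendsto (fun T => B T / T ^ ((0:ℝ) + 1)) atTop (𝓝 (K / ((0:ℝ) + 1))) := by
      apply karamata (continuous_id.mul hGc) (by norm_num : (-1:ℝ) < 0)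
      apply hGt1.congr'
      filter_upwards with t
      rw [Real.rpow_zero, div_one]
      simp only [Pi.mul_apply, id_eq]
      ring
    have kB' : Tendsto (fun T : ℝ => B T / T) atTop (𝓝 K) := by
      have := kB.congr (fun T => by rw [show ((0:ℝ) + 1) = 1 by norm_num, Real.rpow_one])
      rw [show K / ((0:ℝ) + 1) = K by norm_num] at this
      exact this
    set D : ℝ := 2 * c * K with hDdef
    have hD0 : 0 < D := by rw [hDdef]; positivity
    refine ⟨D, hD0, ?_⟩
    have hT : Tendsto (fun h : ℝ => c / h) (𝓝[>] (0:ℝ)) atTop := by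
      apply Tendsto.congr (fun h => (div_eq_mul_inv c h).symm)
      exact tendsto_inv_nhdsGT_zero.const_mul_atTop hc0
    have cA := kal.comp hT
    have cB := kB'.comp hT
    have hL : Tendsto (fun h : ℝ => Real.log (1/h)) (𝓝[>] (0:ℝ)) atTop := by
      have h1 : Tendsto (fun h : ℝ => 1/h) (𝓝[>] (0:ℝ)) atTop :=
        Tendsto.congr (fun h => (one_div h).symm) tendsto_inv_nhdsGT_zero
      exact Real.tendsto_log_atTop.comp h1
    have f2 : Tendsto (fun h : ℝ => Real.log (c/h) / Real.log (1/h)) (𝓝[>] (0:ℝ))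
        (𝓝 1) := by
      have h0 := Tendsto.div_atTop (tendsto_const_nhds (x := Real.log c)) hL
      have h1 := h0.add (tendsto_const_nhds (x := (1:ℝ)))
      rw [zero_add] at h1
      apply h1.congr'
      filter_upwards [Ioo_mem_nhdsGT_of_mem
        (Set.mem_Ico.2 ⟨le_rfl, (by norm_num : (0:ℝ) < 1)⟩)] with h hmem
      obtain ⟨hh0, hh1⟩ := hmem
      have hLpos : 0 < Real.log (1/h) := by
        apply Real.log_pos
        rw [lt_div_iff₀ hh0]
        linarith
      have hlogch : Real.log (c/h) = Real.log c + Real.log (1/h) := by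
        rw [one_div, Real.log_inv, Real.log_div (ne_of_gt hc0) (ne_of_gt hh0)]
        ring
      rw [hlogch, add_div, div_self (ne_of_gt hLpos)]
    have term1 := cA.mul f2
    rw [mul_one] at term1
    have hinvL : Tendsto (fun h : ℝ => (Real.log (1/h))⁻¹) (𝓝[>] (0:ℝ)) (𝓝 0) :=
      hL.inv_tendsto_atTop
    have term2 := (cB.const_mul c).mul hinvL
    rw [mul_zero] at term2
    have total := (term1.const_mul (2 * c / D)).sub (term2.const_mul (2 / D))
    have hvalue : 2 * c / D * K - 2 / D * 0 = 1 := by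
      rw [hDdef]
      field_simp
      ring
    rw [hvalue] at total
    apply total.congr'
    filter_upwards [master, Ioo_mem_nhdsGT_of_mem
      (Set.mem_Ico.2 ⟨le_rfl, lt_min hc0 one_pos⟩)] with h hm hmem
    obtain ⟨hh0, hhlt⟩ := hmem
    have hhc : h < c := lt_of_lt_of_le hhlt (min_le_left _ _)
    have hh1 : h < 1 := lt_of_lt_of_le hhlt (min_le_right _ _)
    simp only [Function.comp]
    have hLpos : 0 < Real.log (1/h) := by
      apply Real.log_pos
      rw [lt_div_iff₀ hh0]
      linarith
    have hlogchpos : 0 < Real.log (c/h) := by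
      apply Real.log_pos
      rw [lt_div_iff₀ hh0, one_mul]
      exact hhc
    have hQs : Q h = c * A (c/h) - h * B (c/h) := by
      show (∫ t in (0:ℝ)..(c/h), (c - h*t) * Gf t) = _
      calc (∫ t in (0:ℝ)..(c/h), (c - h*t) * Gf t)
          = ∫ t in (0:ℝ)..(c/h), (c * Gf t - h * (t * Gf t)) :=
            intervalIntegral.integral_congr fun t _ => by ring
        _ = (∫ t in (0:ℝ)..(c/h), c * Gf t) - ∫ t in (0:ℝ)..(c/h), h * (t * Gf t) :=
            intervalIntegral.integral_sub ((continuous_const.mul hGc).intervalIntegrable _ _)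
              ((continuous_const.mul (continuous_id.mul hGc)).intervalIntegrable _ _)
        _ = c * A (c/h) - h * B (c/h) := by
            rw [intervalIntegral.integral_const_mul, intervalIntegral.integral_const_mul]
    have hm' : (∫ x in a..b, ∫ y in a..b, |rhoPow r h (x - y)| ^ k) = 2 * (h * Q h) := hm
    rw [hm', hQs]
    exact algebra_iii hh0 hc0 (ne_of_gt hD0) (ne_of_gt hLpos) (ne_of_gt hlogchpos)
  · -- case (iv)
    intro hα
    have hint : IntegrableOn Gf (Set.Ioi 0) := G_integrable hr hα
    have hM : 0 < ∫ t in Set.Ioi (0:ℝ), Gf t := G_pos_integral hr hint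
    exact ⟨2 * c * (∫ t in Set.Ioi (0:ℝ), Gf t), by positivity,
      case24 _ hM hint rfl⟩
end
end
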